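/- arXiv:math/0005235 — 6 statements merged into one kernel-verified Lean document; each statement's English description precedes it below -/
import Mathlib

section
/- Let Y be a random variable satisfying Y =_d U Y + (1-U) Z + g(U) with U uniform on (0,1), Z an independent copy of Y, and g(u) = 2u ln u + 2(1-u) ln(1-u) + 1. Then its characteristic function φ satisfies |φ(t)| ≤ 2 |t|^{-1/2} for all real t ≠ 0. -/
/-!
Using the fixed-point equation and the independence of `(Y, Z)` and `U`, `φ(t)` is an average
over `(y, z)` of the oscillatory integrals `∫₀¹ exp(i t (u y + (1 - u) z + g u)) du`. Their
phase has second derivative `t (2 / u + 2 / (1 - u))`, of absolute value at least `8 |t|`, so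
van der Corput's second-derivative estimate bounds each of them by
`4 √(2 / (8 |t|)) = 2 |t| ^ (-1/2)`.
-/

open Set Real MeasureTheory ProbabilityTheory

theorem mul_sub_le_sub_of_le_hasDerivAt {f f' : ℝ → ℝ} {a b c x y : ℝ}
    (hf : ∀ u ∈ Ioo a b, HasDerivAt f (f' u) u) (hc : ∀ u ∈ Ioo a b, c ≤ f' u)
    (hx : x ∈ Ioo a b) (hy : y ∈ Ioo a b) (hxy : x ≤ y) :
    c * (y - x) ≤ f y - f x := by
  refine (convex_Ioo a b).mul_sub_le_image_sub_of_le_deriv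
    (fun u hu => (hf u hu).continuousAt.continuousWithinAt)
    (fun u hu => (hf u (interior_subset hu)).differentiableAt.differentiableWithinAt)
    (fun u hu => ?_) x hx y hy hxy
  rw [(hf u (interior_subset hu)).deriv]
  exact hc u (interior_subset hu)

theorem intervalIntegrable_exp_I_mul {f : ℝ → ℝ} {a b : ℝ} (hab : a ≤ b)
    (hf : ContinuousOn f (Ioo a b)) :
    IntervalIntegrable (fun u => Complex.exp (Complex.I * f u)) volume a b := by
  rw [intervalIntegrable_iff_integrableOn_Ioo_of_le hab]
  refine Integrable.mono' (g := fun _ => (1 : ℝ)) (integrableOn_const (by simp))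
    ((by fun_prop : ContinuousOn _ _).aestronglyMeasurable measurableSet_Ioo)
    (ae_of_all _ fun u => (Complex.norm_exp_I_mul_ofReal _).le)

theorem norm_intervalIntegral_le_of_forall_Ioo_right {E : Type*} [NormedAddCommGroup E]
    [NormedSpace ℝ E] {F : ℝ → E} {a b C : ℝ} (hab : a < b)
    (hF : IntervalIntegrable F volume a b) (h : ∀ s ∈ Ioo a b, ‖∫ u in a..s, F u‖ ≤ C) :
    ‖∫ u in a..b, F u‖ ≤ C := by
  have hcont := intervalIntegral.continuousOn_primitive_interval ((intervalIntegrable_iff').1 hF)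
  refine ContinuousWithinAt.closure_le (s := Ioo a b) (by simp [closure_Ioo hab.ne, hab.le])
    ((hcont b right_mem_uIcc).mono ?_).norm continuousWithinAt_const h
  exact Ioo_subset_Icc_self.trans Icc_subset_uIcc

theorem norm_intervalIntegral_le_of_forall_Ioo_left {E : Type*} [NormedAddCommGroup E]
    [NormedSpace ℝ E] {F : ℝ → E} {a b C : ℝ} (hab : a < b)
    (hF : IntervalIntegrable F volume a b) (h : ∀ s ∈ Ioo a b, ‖∫ u in s..b, F u‖ ≤ C) :
    ‖∫ u in a..b, F u‖ ≤ C := by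
  have hcont :=
    intervalIntegral.continuousOn_primitive_interval_left ((intervalIntegrable_iff').1 hF)
  refine ContinuousWithinAt.closure_le (s := Ioo a b) (by simp [closure_Ioo hab.ne, hab.le])
    ((hcont a left_mem_uIcc).mono ?_).norm continuousWithinAt_const h
  exact Ioo_subset_Icc_self.trans Icc_subset_uIcc

theorem hasDerivAt_exp_I_mul_div_I_mul {f f' f'' : ℝ → ℝ} {u : ℝ}
    (hf : HasDerivAt f (f' u) u) (hf' : HasDerivAt f' (f'' u) u) (hne : f' u ≠ 0) :
    HasDerivAt (fun x => Complex.exp (Complex.I * f x) / (Complex.I * f' x))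
      (Complex.exp (Complex.I * f u) +
        Complex.exp (Complex.I * f u) * (Complex.I * f'' u) / (f' u : ℂ) ^ 2) u := by
  have hexp : HasDerivAt (fun x => Complex.exp (Complex.I * f x))
      (Complex.exp (Complex.I * f u) * (Complex.I * f' u)) u := by
    simpa [mul_comm] using (hf.ofReal_comp.const_mul Complex.I).cexp
  have hne' : (f' u : ℂ) ≠ 0 := Complex.ofReal_ne_zero.2 hne
  refine (hexp.div (hf'.ofReal_comp.const_mul Complex.I)
    (mul_ne_zero Complex.I_ne_zero hne')).congr_deriv ?_
  field_simp
  linear_combination -(f'' u : ℂ) * Complex.I_sq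

theorem integral_div_sq_eq_one_div_sub_one_div {f' f'' : ℝ → ℝ} {c d : ℝ}
    (hf' : ∀ u ∈ uIcc c d, HasDerivAt f' (f'' u) u) (hf''c : ContinuousOn f'' (uIcc c d))
    (hf'ne : ∀ u ∈ uIcc c d, f' u ≠ 0) :
    ∫ u in c..d, f'' u / f' u ^ 2 = 1 / f' c - 1 / f' d := by
  have hf'c : ContinuousOn f' (uIcc c d) := fun u hu =>
    (hf' u hu).continuousAt.continuousWithinAt
  rw [intervalIntegral.integral_eq_sub_of_hasDerivAt (f := fun u => -(f' u)⁻¹)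
    (f' := fun u => f'' u / f' u ^ 2)
    (fun u hu => ((hf' u hu).inv (hf'ne u hu)).neg.congr_deriv (by ring))
    ((hf''c.div (hf'c.pow 2) fun u hu => pow_ne_zero 2 (hf'ne u hu)).intervalIntegrable)]
  ring

theorem norm_integral_exp_I_mul_le_of_hasDerivAt {f f' f'' : ℝ → ℝ} {c d : ℝ}
    (hcd : c ≤ d) (hf : ∀ u ∈ Icc c d, HasDerivAt f (f' u) u)
    (hf' : ∀ u ∈ Icc c d, HasDerivAt f' (f'' u) u)
    (hf''c : ContinuousOn f'' (Icc c d)) (hf'ne : ∀ u ∈ Icc c d, f' u ≠ 0)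
    (hf''nn : ∀ u ∈ Icc c d, 0 ≤ f'' u) :
    ‖∫ u in c..d, Complex.exp (Complex.I * f u)‖ ≤
      1 / |f' c| + 1 / |f' d| + (1 / f' c - 1 / f' d) := by
  rw [← uIcc_of_le hcd] at hf hf' hf''c hf'ne hf''nn
  set F : ℝ → ℂ := fun u => Complex.exp (Complex.I * f u)
  set E : ℝ → ℂ := fun u => F u * (Complex.I * f'' u) / (f' u : ℂ) ^ 2
  have hF_norm (u : ℝ) : ‖F u‖ = 1 := Complex.norm_exp_I_mul_ofReal _
  have hFc : ContinuousOn F (uIcc c d) := by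
    have : ContinuousOn f (uIcc c d) := fun u hu => (hf u hu).continuousAt.continuousWithinAt
    fun_prop
  have hEc : ContinuousOn E (uIcc c d) := by
    have : ContinuousOn f' (uIcc c d) := fun u hu => (hf' u hu).continuousAt.continuousWithinAt
    refine (hFc.mul (by fun_prop)).div (by fun_prop) fun u hu => ?_
    exact pow_ne_zero 2 (Complex.ofReal_ne_zero.2 (hf'ne u hu))
  have hparts : ∫ u in c..d, F u =
      F d / (Complex.I * f' d) - F c / (Complex.I * f' c) - ∫ u in c..d, E u := by
    rw [← intervalIntegral.integral_eq_sub_of_hasDerivAt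
      (fun u hu => hasDerivAt_exp_I_mul_div_I_mul (hf u hu) (hf' u hu) (hf'ne u hu))
      ((hFc.add hEc).intervalIntegrable),
      intervalIntegral.integral_add hFc.intervalIntegrable hEc.intervalIntegrable]
    ring
  have hE : ‖∫ u in c..d, E u‖ ≤ 1 / f' c - 1 / f' d := by
    have hE_norm : ∀ u ∈ uIcc c d, ‖E u‖ = f'' u / f' u ^ 2 := fun u hu => by
      simp [E, hF_norm, abs_of_nonneg (hf''nn u hu)]
    calc ‖∫ u in c..d, E u‖ ≤ ∫ u in c..d, ‖E u‖ :=
          intervalIntegral.norm_integral_le_integral_norm hcd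
      _ = 1 / f' c - 1 / f' d := by
          rw [intervalIntegral.integral_congr hE_norm,
            integral_div_sq_eq_one_div_sub_one_div hf' hf''c hf'ne]
  have hG_norm (u : ℝ) : ‖F u / (Complex.I * f' u)‖ = 1 / |f' u| := by
    simp [hF_norm]
  calc ‖∫ u in c..d, F u‖
      ≤ ‖F d / (Complex.I * f' d)‖ + ‖F c / (Complex.I * f' c)‖ +
          ‖∫ u in c..d, E u‖ := by
        rw [hparts]
        exact (norm_sub_le _ _).trans (add_le_add_left (norm_sub_le _ _) _)
    _ = 1 / |f' c| + 1 / |f' d| + ‖∫ u in c..d, E u‖ := by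
        rw [hG_norm, hG_norm, add_comm (1 / |f' d|)]
    _ ≤ 1 / |f' c| + 1 / |f' d| + (1 / f' c - 1 / f' d) := by gcongr

theorem norm_integral_exp_I_mul_le_of_deriv_pos {f f' f'' : ℝ → ℝ} {a b c : ℝ}
    (hc : c ∈ Ioo a b) (hf : ∀ u ∈ Ioo a b, HasDerivAt f (f' u) u)
    (hf' : ∀ u ∈ Ioo a b, HasDerivAt f' (f'' u) u) (hf''c : ContinuousOn f'' (Ioo a b))
    (hf''nn : ∀ u ∈ Ioo a b, 0 ≤ f'' u) (hpos : 0 < f' c) :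
    ‖∫ u in c..b, Complex.exp (Complex.I * f u)‖ ≤ 2 / f' c := by
  refine norm_intervalIntegral_le_of_forall_Ioo_right hc.2
    (intervalIntegrable_exp_I_mul hc.2.le fun u hu =>
      (hf u ⟨hc.1.trans hu.1, hu.2⟩).continuousAt.continuousWithinAt) fun s hs => ?_
  have hsub : Icc c s ⊆ Ioo a b := Icc_subset_Ioo hc.1 hs.2
  have hmono : ∀ u ∈ Icc c s, f' c ≤ f' u := fun u hu => by
    simpa using mul_sub_le_sub_of_le_hasDerivAt hf' hf''nn hc (hsub hu) hu.1
  have h := norm_integral_exp_I_mul_le_of_hasDerivAt hs.1.le (fun u hu => hf u (hsub hu))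
    (fun u hu => hf' u (hsub hu)) (hf''c.mono hsub)
    (fun u hu => (hpos.trans_le (hmono u hu)).ne') (fun u hu => hf''nn u (hsub hu))
  rw [abs_of_pos hpos, abs_of_pos (hpos.trans_le (hmono s (right_mem_Icc.2 hs.1.le)))] at h
  exact h.trans_eq (by ring)

theorem norm_integral_exp_I_mul_le_of_deriv_neg {f f' f'' : ℝ → ℝ} {a b c : ℝ}
    (hc : c ∈ Ioo a b) (hf : ∀ u ∈ Ioo a b, HasDerivAt f (f' u) u)
    (hf' : ∀ u ∈ Ioo a b, HasDerivAt f' (f'' u) u) (hf''c : ContinuousOn f'' (Ioo a b))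
    (hf''nn : ∀ u ∈ Ioo a b, 0 ≤ f'' u) (hneg : f' c < 0) :
    ‖∫ u in a..c, Complex.exp (Complex.I * f u)‖ ≤ 2 / -f' c := by
  refine norm_intervalIntegral_le_of_forall_Ioo_left hc.1
    (intervalIntegrable_exp_I_mul hc.1.le fun u hu =>
      (hf u ⟨hu.1, hu.2.trans hc.2⟩).continuousAt.continuousWithinAt) fun s hs => ?_
  have hsub : Icc s c ⊆ Ioo a b := Icc_subset_Ioo hs.1 hc.2
  have hmono : ∀ u ∈ Icc s c, f' u ≤ f' c := fun u hu => by
    simpa using mul_sub_le_sub_of_le_hasDerivAt hf' hf''nn (hsub hu) hc hu.2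
  have h := norm_integral_exp_I_mul_le_of_hasDerivAt hs.2.le (fun u hu => hf u (hsub hu))
    (fun u hu => hf' u (hsub hu)) (hf''c.mono hsub)
    (fun u hu => ((hmono u hu).trans_lt hneg).ne) (fun u hu => hf''nn u (hsub hu))
  rw [abs_of_neg hneg, abs_of_neg ((hmono s (left_mem_Icc.2 hs.2.le)).trans_lt hneg)] at h
  exact h.trans_eq (by ring)

theorem norm_integral_exp_I_mul_le_of_le_deriv2_right {f f' f'' : ℝ → ℝ}
    {a b u₀ lam δ : ℝ}
    (hu₀ : u₀ ∈ Ioo a b) (hf : ∀ u ∈ Ioo a b, HasDerivAt f (f' u) u)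
    (hf' : ∀ u ∈ Ioo a b, HasDerivAt f' (f'' u) u) (hf''c : ContinuousOn f'' (Ioo a b))
    (hlam : 0 < lam) (hle : ∀ u ∈ Ioo a b, lam ≤ f'' u) (hstat : f' u₀ = 0) (hδ : 0 < δ) :
    ‖∫ u in min b (u₀ + δ)..b, Complex.exp (Complex.I * f u)‖ ≤ 2 / (lam * δ) := by
  rcases le_or_gt b (u₀ + δ) with h | h
  · simp only [min_eq_left h, intervalIntegral.integral_same, norm_zero]
    positivity
  have hmem : u₀ + δ ∈ Ioo a b := ⟨by linarith [hu₀.1], h⟩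
  have hf'δ : lam * δ ≤ f' (u₀ + δ) := by
    simpa [hstat] using mul_sub_le_sub_of_le_hasDerivAt hf' hle hu₀ hmem (by linarith)
  rw [min_eq_right h.le]
  calc _ ≤ 2 / f' (u₀ + δ) := norm_integral_exp_I_mul_le_of_deriv_pos hmem hf hf' hf''c
          (fun u hu => hlam.le.trans (hle u hu)) (by nlinarith)
    _ ≤ 2 / (lam * δ) := by gcongr

theorem norm_integral_exp_I_mul_le_of_le_deriv2_left {f f' f'' : ℝ → ℝ}
    {a b u₀ lam δ : ℝ}
    (hu₀ : u₀ ∈ Ioo a b) (hf : ∀ u ∈ Ioo a b, HasDerivAt f (f' u) u)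
    (hf' : ∀ u ∈ Ioo a b, HasDerivAt f' (f'' u) u) (hf''c : ContinuousOn f'' (Ioo a b))
    (hlam : 0 < lam) (hle : ∀ u ∈ Ioo a b, lam ≤ f'' u) (hstat : f' u₀ = 0) (hδ : 0 < δ) :
    ‖∫ u in a..max a (u₀ - δ), Complex.exp (Complex.I * f u)‖ ≤ 2 / (lam * δ) := by
  rcases le_or_gt (u₀ - δ) a with h | h
  · simp only [max_eq_left h, intervalIntegral.integral_same, norm_zero]
    positivity
  have hmem : u₀ - δ ∈ Ioo a b := ⟨h, by linarith [hu₀.2]⟩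
  have hf'δ : lam * δ ≤ -f' (u₀ - δ) := by
    simpa [hstat] using mul_sub_le_sub_of_le_hasDerivAt hf' hle hmem hu₀ (by linarith)
  rw [max_eq_right h.le]
  calc _ ≤ 2 / -f' (u₀ - δ) := norm_integral_exp_I_mul_le_of_deriv_neg hmem hf hf' hf''c
          (fun u hu => hlam.le.trans (hle u hu)) (by nlinarith)
    _ ≤ 2 / (lam * δ) := by gcongr

/-- Van der Corput's second-derivative estimate, for a phase with a stationary point. -/
theorem norm_integral_exp_I_mul_le_of_le_deriv2 {f f' f'' : ℝ → ℝ} {a b u₀ lam : ℝ}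
    (hu₀ : u₀ ∈ Ioo a b) (hf : ∀ u ∈ Ioo a b, HasDerivAt f (f' u) u)
    (hf' : ∀ u ∈ Ioo a b, HasDerivAt f' (f'' u) u) (hf''c : ContinuousOn f'' (Ioo a b))
    (hlam : 0 < lam) (hle : ∀ u ∈ Ioo a b, lam ≤ f'' u) (hstat : f' u₀ = 0) :
    ‖∫ u in a..b, Complex.exp (Complex.I * f u)‖ ≤ 4 * √(2 / lam) := by
  set F : ℝ → ℂ := fun u => Complex.exp (Complex.I * f u)
  -- within `δ` of `u₀` bound `F` by `1`; beyond it `|f'| ≥ lam * δ`; `δ` balances the two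
  set δ := √(2 / lam)
  have hδ : 0 < δ := by positivity
  have hlamδ : 2 / (lam * δ) = δ := by
    have : lam * δ ^ 2 = 2 := by rw [sq_sqrt (by positivity)]; field_simp
    rw [div_eq_iff (by positivity)]
    linear_combination -this
  set A := max a (u₀ - δ)
  set B := min b (u₀ + δ)
  have hA : A ∈ Icc a b :=
    ⟨le_max_left _ _, max_le (hu₀.1.trans hu₀.2).le (by linarith [hu₀.2])⟩
  have hB : B ∈ Icc a b :=
    ⟨le_min (hu₀.1.trans hu₀.2).le (by linarith [hu₀.1]), min_le_left _ _⟩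
  have hmid : ‖∫ u in A..B, F u‖ ≤ 2 * δ := by
    refine (intervalIntegral.norm_integral_le_of_norm_le_const
      fun u _ => (Complex.norm_exp_I_mul_ofReal _).le).trans ?_
    rw [one_mul, abs_le]
    constructor <;> linarith [le_max_right a (u₀ - δ), min_le_right b (u₀ + δ),
      max_le hu₀.1.le (by linarith : u₀ - δ ≤ u₀),
      le_min hu₀.2.le (by linarith : u₀ ≤ u₀ + δ)]
  have hint : ∀ x ∈ Icc a b, ∀ y ∈ Icc a b, IntervalIntegrable F volume x y := by
    have hab := intervalIntegrable_exp_I_mul (hu₀.1.trans hu₀.2).le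
      fun u hu => (hf u hu).continuousAt.continuousWithinAt
    exact fun x hx y hy =>
      hab.mono_set (uIcc_subset_uIcc (Icc_subset_uIcc hx) (Icc_subset_uIcc hy))
  have ha : a ∈ Icc a b := left_mem_Icc.2 (hu₀.1.trans hu₀.2).le
  have hb : b ∈ Icc a b := right_mem_Icc.2 (hu₀.1.trans hu₀.2).le
  rw [← intervalIntegral.integral_add_adjacent_intervals (hint a ha B hB) (hint B hB b hb),
    ← intervalIntegral.integral_add_adjacent_intervals (hint a ha A hA) (hint A hA B hB)]
  calc _ ≤ ‖∫ u in a..A, F u‖ + ‖∫ u in A..B, F u‖ + ‖∫ u in B..b, F u‖ :=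
        (norm_add_le _ _).trans (add_le_add_left (norm_add_le _ _) _)
    _ ≤ 2 / (lam * δ) + 2 * δ + 2 / (lam * δ) := by
        gcongr
        · exact norm_integral_exp_I_mul_le_of_le_deriv2_left hu₀ hf hf' hf''c hlam hle hstat hδ
        · exact norm_integral_exp_I_mul_le_of_le_deriv2_right hu₀ hf hf' hf''c hlam hle hstat hδ
    _ = 4 * δ := by rw [hlamδ]; ring

theorem norm_integral_exp_I_mul_const_mul_le_of_le_deriv2 {h h' h'' : ℝ → ℝ}
    {a b u₀ lam t : ℝ}
    (ht : t ≠ 0) (hu₀ : u₀ ∈ Ioo a b) (hh : ∀ u ∈ Ioo a b, HasDerivAt h (h' u) u)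
    (hh' : ∀ u ∈ Ioo a b, HasDerivAt h' (h'' u) u) (hh''c : ContinuousOn h'' (Ioo a b))
    (hlam : 0 < lam) (hle : ∀ u ∈ Ioo a b, lam ≤ h'' u) (hstat : h' u₀ = 0) :
    ‖∫ u in a..b, Complex.exp (Complex.I * t * h u)‖ ≤ 4 * √(2 / (|t| * lam)) := by
  have habs := abs_pos.2 ht
  have key := norm_integral_exp_I_mul_le_of_le_deriv2 (f := fun u => |t| * h u) hu₀
    (fun u hu => (hh u hu).const_mul |t|) (fun u hu => (hh' u hu).const_mul |t|)
    (continuousOn_const.mul hh''c) (mul_pos habs hlam)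
    (fun u hu => mul_le_mul_of_nonneg_left (hle u hu) habs.le) (by simp [hstat])
  rcases ht.lt_or_gt with hneg | hpos
  · -- for `t < 0` the integrand is the conjugate of the one with phase `|t| * h`
    have hconj : ∀ u, Complex.exp (Complex.I * t * h u) =
        (starRingEnd ℂ) (Complex.exp (Complex.I * ((|t| * h u : ℝ) : ℂ))) := by
      intro u
      rw [← Complex.exp_conj, abs_of_neg hneg]
      congr 1
      simp only [map_mul, Complex.conj_I, Complex.conj_ofReal]
      push_cast
      ring
    simp_rw [hconj, intervalIntegral.integral_of_le (hu₀.1.trans hu₀.2).le, integral_conj,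
      RCLike.norm_conj, ← intervalIntegral.integral_of_le (hu₀.1.trans hu₀.2).le]
    exact key
  · simpa only [abs_of_pos hpos, Complex.ofReal_mul, mul_assoc] using key

theorem norm_integral_comp_le_of_indepFun {Ω α β E : Type*} [MeasurableSpace Ω]
    [MeasurableSpace α] [MeasurableSpace β] [NormedAddCommGroup E] [NormedSpace ℝ E]
    {μ : Measure Ω} [IsProbabilityMeasure μ] {V : Ω → α} {U : Ω → β}
    (hV : Measurable V) (hU : Measurable U) (hVU : IndepFun V U μ) {F : α → β → E}
    (hF : AEStronglyMeasurable (Function.uncurry F) ((μ.map V).prod (μ.map U))) {C : ℝ}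
    (hC : ∀ v, ‖∫ u, F v u ∂(μ.map U)‖ ≤ C) :
    ‖∫ ω, F (V ω) (U ω) ∂μ‖ ≤ C := by
  have hmap := (indepFun_iff_map_prod_eq_prod_map_map hV.aemeasurable hU.aemeasurable).1 hVU
  have hprod : ∫ ω, F (V ω) (U ω) ∂μ =
      ∫ p, Function.uncurry F p ∂((μ.map V).prod (μ.map U)) := by
    rw [← hmap, integral_map (hV.prodMk hU).aemeasurable (hmap ▸ hF)]
    rfl
  have := Measure.isProbabilityMeasure_map (μ := μ) hV.aemeasurable
  rw [hprod]
  by_cases hint : Integrable (Function.uncurry F) ((μ.map V).prod (μ.map U))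
  · rw [integral_prod _ hint]
    simpa using norm_integral_le_of_norm_le_const (μ := μ.map V) (ae_of_all _ hC)
  · obtain ⟨ω⟩ := nonempty_of_isProbabilityMeasure μ
    rw [integral_undef hint, norm_zero]
    exact (norm_nonneg _).trans (hC (V ω))

/-- The toll function `g` of the Quicksort fixed-point equation. -/
noncomputable def quicksortToll (u : ℝ) : ℝ := 2 * u * log u + 2 * (1 - u) * log (1 - u) + 1

@[fun_prop]
theorem measurable_quicksortToll : Measurable quicksortToll := by
  unfold quicksortToll
  fun_prop

theorem hasDerivAt_quicksortToll {u : ℝ} (hu : u ∈ Ioo (0 : ℝ) 1) :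
    HasDerivAt quicksortToll (2 * log u - 2 * log (1 - u)) u := by
  have h1 := (hasDerivAt_id u).const_sub 1
  have h := (((Real.hasDerivAt_mul_log hu.1.ne').const_mul 2).add
    (((Real.hasDerivAt_mul_log (sub_pos.2 hu.2).ne').comp u h1).const_mul 2)).add_const 1
  refine (h.congr_deriv (by ring)).congr_of_eventuallyEq (.of_forall fun x => ?_)
  simp only [quicksortToll, Pi.add_apply, Function.comp_apply]
  ring

theorem hasDerivAt_two_mul_log_sub {u : ℝ} (hu : u ∈ Ioo (0 : ℝ) 1) :
    HasDerivAt (fun x => 2 * log x - 2 * log (1 - x)) (2 / u + 2 / (1 - u)) u := by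
  have h := ((Real.hasDerivAt_log hu.1.ne').const_mul 2).sub
    (((Real.hasDerivAt_log (sub_pos.2 hu.2).ne').comp u
      ((hasDerivAt_id u).const_sub 1)).const_mul 2)
  exact h.congr_deriv (by ring)

theorem eight_le_two_div_add_two_div_one_sub {u : ℝ} (hu : u ∈ Ioo (0 : ℝ) 1) :
    8 ≤ 2 / u + 2 / (1 - u) := by
  have h0 := hu.1
  have h1 := sub_pos.2 hu.2
  rw [div_add_div _ _ h0.ne' h1.ne', le_div_iff₀ (by positivity)]
  nlinarith [sq_nonneg (2 * u - 1)]

theorem two_mul_log_sub_logistic (c : ℝ) :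
    2 * log (1 + exp c)⁻¹ - 2 * log (1 - (1 + exp c)⁻¹) = -(2 * c) := by
  have hpos : 0 < 1 + exp c := by positivity
  rw [show 1 - (1 + exp c)⁻¹ = exp c * (1 + exp c)⁻¹ by field_simp; ring,
    log_mul (exp_pos c).ne' (inv_pos.2 hpos).ne', log_exp]
  ring

theorem norm_integral_exp_quicksort_phase_le (y z : ℝ) {t : ℝ} (ht : t ≠ 0) :
    ‖∫ u in (0 : ℝ)..1,
        Complex.exp (Complex.I * t * ((u * y + (1 - u) * z + quicksortToll u : ℝ) : ℂ))‖ ≤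
      2 * |t| ^ (-(1 / 2) : ℝ) := by
  -- the stationary point of the phase: `2 log (u₀ / (1 - u₀)) = z - y`
  set u₀ := (1 + exp ((y - z) / 2))⁻¹
  have hu₀ : u₀ ∈ Ioo (0 : ℝ) 1 :=
    ⟨by positivity, inv_lt_one_of_one_lt₀ (by linarith [exp_pos ((y - z) / 2)])⟩
  have hcont : ContinuousOn (fun u : ℝ => 2 / u + 2 / (1 - u)) (Ioo 0 1) :=
    fun u hu => ((continuousAt_const.div continuousAt_id hu.1.ne').add (continuousAt_const.div
      (continuousAt_const.sub continuousAt_id) (sub_pos.2 hu.2).ne')).continuousWithinAt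
  refine (norm_integral_exp_I_mul_const_mul_le_of_le_deriv2 (lam := 8) ht hu₀
    (h := fun u => u * y + (1 - u) * z + quicksortToll u)
    (h' := fun u => y - z + (2 * log u - 2 * log (1 - u))) (h'' := fun u => 2 / u + 2 / (1 - u))
    (fun u hu => ?_) (fun u hu => (hasDerivAt_two_mul_log_sub hu).const_add _) hcont
    (by norm_num) (fun u hu => eight_le_two_div_add_two_div_one_sub hu) ?_).trans_eq ?_
  · exact ((((hasDerivAt_id' u).mul_const y).add
      (((hasDerivAt_id' u).const_sub 1).mul_const z)).add
      (hasDerivAt_quicksortToll hu)).congr_deriv (by ring)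
  · simp only [u₀, two_mul_log_sub_logistic]
    ring
  · rw [show 2 / (|t| * 8) = (1 / 2) ^ 2 * |t|⁻¹ by field_simp; norm_num,
      sqrt_mul (by positivity), sqrt_sq (by positivity), sqrt_inv, sqrt_eq_rpow,
      ← rpow_neg (abs_nonneg t)]
    ring

theorem quicksort_charfun_half_bound_general
    {Ω : Type*} [MeasurableSpace Ω] (μ : Measure Ω) [IsProbabilityMeasure μ]
    (Y Z U : Ω → ℝ) (hY : Measurable Y) (hZ : Measurable Z) (hU : Measurable U)
    (g : ℝ → ℝ)
    (hg : ∀ u : ℝ, g u = 2 * u * Real.log u + 2 * (1 - u) * Real.log (1 - u) + 1)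
    (hindep : iIndepFun ![Y, Z, U] μ)
    (hUunif : Measure.map U μ = volume.restrict (Ioo (0:ℝ) 1))
    (hfix : Measure.map (fun ω => U ω * Y ω + (1 - U ω) * Z ω + g (U ω)) μ
            = Measure.map Y μ)
    (φ : ℝ → ℂ)
    (hφ : ∀ t : ℝ, φ t = ∫ ω, Complex.exp (Complex.I * t * Y ω) ∂μ) :
    ∀ t : ℝ, t ≠ 0 → ‖φ t‖ ≤ 2 * |t| ^ (-(1/2) : ℝ) := by
  intro t ht
  obtain rfl : g = quicksortToll := funext hg
  have hφX : φ t = ∫ ω, Complex.exp (Complex.I * t *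
      ((U ω * Y ω + (1 - U ω) * Z ω + quicksortToll (U ω) : ℝ) : ℂ)) ∂μ := by
    have hX : IdentDistrib
        (fun ω => U ω * Y ω + (1 - U ω) * Z ω + quicksortToll (U ω)) Y μ μ :=
      ⟨by fun_prop, hY.aemeasurable, hfix⟩
    rw [hφ t]
    exact (hX.comp (by fun_prop : Measurable fun x : ℝ =>
      Complex.exp (Complex.I * t * x))).integral_eq.symm
  have hYZ_U : IndepFun (fun ω => (Y ω, Z ω)) U μ := by
    simpa using hindep.indepFun_prodMk (fun i => by fin_cases i <;> assumption) 0 1 2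
      (by decide) (by decide)
  rw [hφX]
  refine norm_integral_comp_le_of_indepFun (hY.prodMk hZ) hU hYZ_U
    (F := fun v u =>
      Complex.exp (Complex.I * t * ((u * v.1 + (1 - u) * v.2 + quicksortToll u : ℝ) : ℂ)))
    (Measurable.aestronglyMeasurable (by unfold Function.uncurry; fun_prop)) fun v => ?_
  rw [hUunif, ← integral_Ioc_eq_integral_Ioo, ← intervalIntegral.integral_of_le zero_le_one]
  exact norm_integral_exp_quicksort_phase_le v.1 v.2 ht

theorem quicksort_charfun_half_bound
    {Ω : Type*} [MeasurableSpace Ω] (μ : Measure Ω) [IsProbabilityMeasure μ]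
    (Y Z U : Ω → ℝ) (hY : Measurable Y) (hZ : Measurable Z) (hU : Measurable U)
    (g : ℝ → ℝ)
    (hg : ∀ u : ℝ, g u = 2 * u * Real.log u + 2 * (1 - u) * Real.log (1 - u) + 1)
    (hindep : iIndepFun ![Y, Z, U] μ)
    (hZY : Measure.map Z μ = Measure.map Y μ)
    (hUunif : Measure.map U μ = volume.restrict (Ioo (0:ℝ) 1))
    (hfix : Measure.map (fun ω => U ω * Y ω + (1 - U ω) * Z ω + g (U ω)) μ
            = Measure.map Y μ)
    (φ : ℝ → ℂ)
    (hφ : ∀ t : ℝ, φ t = ∫ ω, Complex.exp (Complex.I * t * Y ω) ∂μ) :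
    ∀ t : ℝ, t ≠ 0 → ‖φ t‖ ≤ 2 * |t| ^ (-(1/2) : ℝ) :=
  quicksort_charfun_half_bound_general μ Y Z U hY hZ hU g hg hindep hUunif hfix φ hφ
end

section
/- Suppose φ : ℝ → ℂ satisfies |φ(t)| ≤ ∫_0^1 |φ(ut)| |φ((1-u)t)| du for all t, and suppose |φ(t)| ≤ c_p |t|^{-p} for all t ≠ 0, where 0 < p < 1 and c_p > 0. Then |φ(t)| ≤ (Γ(1-p)² / Γ(2-2p)) c_p² |t|^{-2p} for all t ≠ 0. -/
/-!
Inserting the bound ‖φ s‖ ≤ c |s|^(-p) at s = u t and s = (1 - u) t into the integral inequality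
factors out c² |t|^(-2p) and leaves the Beta integral B(1 - p, 1 - p) = Γ(1 - p)² / Γ(2 - 2p),
which converges because p < 1.
-/

open Set Real MeasureTheory

lemma ofReal_rpow_mul_one_sub_rpow {u : ℝ} (hu : u ∈ Ioo (0 : ℝ) 1) (a b : ℝ) :
    ((u ^ (a - 1) * (1 - u) ^ (b - 1) : ℝ) : ℂ) =
      (u : ℂ) ^ ((a : ℂ) - 1) * (1 - (u : ℂ)) ^ ((b : ℂ) - 1) := by
  push_cast [Complex.ofReal_cpow hu.1.le, Complex.ofReal_cpow (sub_nonneg.2 hu.2.le)]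
  rfl

lemma integrableOn_rpow_mul_one_sub_rpow {a b : ℝ} (ha : 0 < a) (hb : 0 < b) :
    IntegrableOn (fun u : ℝ ↦ u ^ (a - 1) * (1 - u) ^ (b - 1)) (Ioo 0 1) := by
  have h := Complex.betaIntegral_convergent (u := a) (v := b) (by simpa) (by simpa)
  rw [intervalIntegrable_iff_integrableOn_Ioo_of_le zero_le_one] at h
  refine IntegrableOn.congr_fun h.re (fun u hu ↦ ?_) measurableSet_Ioo
  simp only [RCLike.re_to_complex, ← ofReal_rpow_mul_one_sub_rpow hu, Complex.ofReal_re]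

lemma integral_rpow_mul_one_sub_rpow {a b : ℝ} (ha : 0 < a) (hb : 0 < b) :
    ∫ u in Ioo (0 : ℝ) 1, u ^ (a - 1) * (1 - u) ^ (b - 1) = Gamma a * Gamma b / Gamma (a + b) := by
  have h := Complex.betaIntegral_eq_Gamma_mul_div a b (by simpa) (by simpa)
  rw [Complex.betaIntegral, intervalIntegral.integral_of_le zero_le_one,
    integral_Ioc_eq_integral_Ioo,
    setIntegral_congr_fun measurableSet_Ioo (fun u hu ↦ (ofReal_rpow_mul_one_sub_rpow hu a b).symm),
    integral_complex_ofReal, ← Complex.ofReal_add, Complex.Gamma_ofReal, Complex.Gamma_ofReal,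
    Complex.Gamma_ofReal] at h
  exact_mod_cast h

lemma norm_mul_norm_le_of_norm_le_rpow {E : Type*} [SeminormedAddGroup E] {φ : ℝ → E} {p c : ℝ}
    (hbd : ∀ t : ℝ, t ≠ 0 → ‖φ t‖ ≤ c * |t| ^ (-p)) {t u : ℝ} (ht : t ≠ 0)
    (hu : u ∈ Ioo (0 : ℝ) 1) :
    ‖φ (u * t)‖ * ‖φ ((1 - u) * t)‖ ≤
      c ^ 2 * |t| ^ (-(2 * p)) * (u ^ (-p) * (1 - u) ^ (-p)) := by
  have hu' : 0 < 1 - u := sub_pos.2 hu.2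
  have h₁ := hbd _ (mul_ne_zero hu.1.ne' ht)
  have h₂ := hbd _ (mul_ne_zero hu'.ne' ht)
  have htt : |t| ^ (-(2 * p)) = |t| ^ (-p) * |t| ^ (-p) := by
    rw [← rpow_add (abs_pos.2 ht)]; ring_nf
  calc ‖φ (u * t)‖ * ‖φ ((1 - u) * t)‖
      ≤ c * |u * t| ^ (-p) * (c * |(1 - u) * t| ^ (-p)) :=
        mul_le_mul h₁ h₂ (norm_nonneg _) ((norm_nonneg _).trans h₁)
    _ = _ := by
        rw [abs_mul, abs_mul, abs_of_pos hu.1, abs_of_pos hu', mul_rpow hu.1.le (abs_nonneg t),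
          mul_rpow hu'.le (abs_nonneg t), htt]
        ring

lemma integral_norm_mul_norm_le_of_norm_le_rpow {E : Type*} [SeminormedAddGroup E] {φ : ℝ → E}
    {p c : ℝ} (hp : p < 1) (hbd : ∀ t : ℝ, t ≠ 0 → ‖φ t‖ ≤ c * |t| ^ (-p)) {t : ℝ} (ht : t ≠ 0) :
    ∫ u in Ioo (0 : ℝ) 1, ‖φ (u * t)‖ * ‖φ ((1 - u) * t)‖ ≤
      Gamma (1 - p) ^ 2 / Gamma (2 - 2 * p) * c ^ 2 * |t| ^ (-(2 * p)) := by
  have hp' : 0 < 1 - p := sub_pos.2 hp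
  have hexp : 1 - p - 1 = -p := by ring
  have hbeta := integral_rpow_mul_one_sub_rpow hp' hp'
  have hint := integrableOn_rpow_mul_one_sub_rpow hp' hp'
  rw [hexp] at hbeta hint
  calc ∫ u in Ioo (0 : ℝ) 1, ‖φ (u * t)‖ * ‖φ ((1 - u) * t)‖
      ≤ ∫ u in Ioo (0 : ℝ) 1, c ^ 2 * |t| ^ (-(2 * p)) * (u ^ (-p) * (1 - u) ^ (-p)) :=
        integral_mono_of_nonneg (.of_forall fun _ ↦ by positivity) (hint.const_mul _)
          (ae_restrict_of_forall_mem measurableSet_Ioo fun _ hu ↦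
            norm_mul_norm_le_of_norm_le_rpow hbd ht hu)
    _ = _ := by
        rw [integral_const_mul, hbeta, ← two_mul, sq, mul_sub, mul_one]
        ring

theorem charfun_bound_doubling_general
    (φ : ℝ → ℂ) (p c : ℝ) (hp1 : p < 1)
    (hineq : ∀ t : ℝ, ‖φ t‖ ≤ ∫ u in Ioo (0:ℝ) 1, ‖φ (u * t)‖ * ‖φ ((1 - u) * t)‖)
    (hbd : ∀ t : ℝ, t ≠ 0 → ‖φ t‖ ≤ c * |t| ^ (-p)) :
    ∀ t : ℝ, t ≠ 0 →
      ‖φ t‖ ≤ (Real.Gamma (1 - p))^2 / Real.Gamma (2 - 2*p) * c^2 * |t| ^ (-(2*p)) :=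
  fun t ht ↦ (hineq t).trans (integral_norm_mul_norm_le_of_norm_le_rpow hp1 hbd ht)

theorem charfun_bound_doubling
    (φ : ℝ → ℂ) (p c : ℝ) (hp0 : 0 < p) (hp1 : p < 1) (hc : 0 < c)
    (hineq : ∀ t : ℝ, ‖φ t‖ ≤ ∫ u in Ioo (0:ℝ) 1, ‖φ (u * t)‖ * ‖φ ((1 - u) * t)‖)
    (hbd : ∀ t : ℝ, t ≠ 0 → ‖φ t‖ ≤ c * |t| ^ (-p)) :
    ∀ t : ℝ, t ≠ 0 →
      ‖φ t‖ ≤ (Real.Gamma (1 - p))^2 / Real.Gamma (2 - 2*p) * c^2 * |t| ^ (-(2*p)) :=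
  charfun_bound_doubling_general φ p c hp1 hineq hbd
end

section
/- Suppose φ : ℝ → ℂ satisfies |φ(t)| ≤ 1 for all t, |φ(t)| ≤ ∫_0^1 |φ(ut)| |φ((1-u)t)| du for all t > 0, and |φ(t)| ≤ c_p t^{-p} for all t > 0, where p > 1 and c_p > 0. Then |φ(t)| ≤ 2^{p+1} c_p^{1+1/p} (p/(p-1)) t^{-(p+1)} for all t > 0. -/
open Set Real MeasureTheory

/-!
Put `a = c^(1/p) / t`, so that the two hypotheses on `φ` give `‖φ (u t)‖ ≤ min 1 ((a/u)^p)`.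
For `u ∈ (0,1)` one of `u`, `1 - u` is at least `1/2`, and there `‖φ‖ ≤ C := c (t/2)^(-p)`;
hence the integrand is at most `C (g u + g (1 - u))` with `g u = min 1 ((a/u)^p)`, and the
integral at most `2 C ∫₀^∞ g = 2 C a p/(p-1)`: `g = 1` on `(0, a]` and `g = a^p u^(-p)` beyond.
-/

theorem integrableOn_Ioo_comp_add_sub {f : ℝ → ℝ} {a b : ℝ} (hab : a ≤ b)
    (hf : IntegrableOn f (Ioo a b)) : IntegrableOn (fun u => f (a + b - u)) (Ioo a b) := by
  rw [← integrableOn_Ioc_iff_integrableOn_Ioo,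
    ← intervalIntegrable_iff_integrableOn_Ioc_of_le hab] at hf ⊢
  simpa using (hf.comp_sub_left (a + b)).symm

theorem setIntegral_Ioo_comp_add_sub (f : ℝ → ℝ) {a b : ℝ} (hab : a ≤ b) :
    ∫ u in Ioo a b, f (a + b - u) = ∫ u in Ioo a b, f u := by
  rw [← integral_Ioc_eq_integral_Ioo, ← integral_Ioc_eq_integral_Ioo,
    ← intervalIntegral.integral_of_le hab, ← intervalIntegral.integral_of_le hab,
    intervalIntegral.integral_comp_sub_left]
  simp

theorem setIntegral_Ioo_mul_comp_one_sub_le {f g : ℝ → ℝ} {C : ℝ} (hC : 0 ≤ C)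
    (hf : ∀ u ∈ Ioo (0 : ℝ) 1, 0 ≤ f u ∧ f u ≤ g u) (hfC : ∀ u ∈ Ico (1 / 2 : ℝ) 1, f u ≤ C)
    (hg : IntegrableOn g (Ioo 0 1)) :
    ∫ u in Ioo (0 : ℝ) 1, f u * f (1 - u) ≤ 2 * C * ∫ u in Ioo (0 : ℝ) 1, g u := by
  have one_sub_mem : ∀ u ∈ Ioo (0 : ℝ) 1, 1 - u ∈ Ioo (0 : ℝ) 1 := fun u hu =>
    ⟨by linarith [hu.2], by linarith [hu.1]⟩
  have hg' : IntegrableOn (fun u => g (1 - u)) (Ioo 0 1) := by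
    simpa using integrableOn_Ioo_comp_add_sub zero_le_one hg
  have hpt : ∀ u ∈ Ioo (0 : ℝ) 1, f u * f (1 - u) ≤ C * (g u + g (1 - u)) := by
    intro u hu
    obtain ⟨hfu₀, hfu⟩ := hf u hu
    obtain ⟨hfv₀, hfv⟩ := hf (1 - u) (one_sub_mem u hu)
    rcases le_or_gt (1 / 2) u with hu₂ | hu₂
    · have := hfC u ⟨hu₂, hu.2⟩
      nlinarith
    · have := hfC (1 - u) ⟨by linarith, (one_sub_mem u hu).2⟩
      nlinarith
  calc ∫ u in Ioo (0 : ℝ) 1, f u * f (1 - u)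
      ≤ ∫ u in Ioo (0 : ℝ) 1, C * (g u + g (1 - u)) := by
        refine integral_mono_of_nonneg ?_ ((hg.add hg').const_mul C) ?_ <;>
          filter_upwards [ae_restrict_mem measurableSet_Ioo] with u hu
        · exact mul_nonneg (hf u hu).1 (hf (1 - u) (one_sub_mem u hu)).1
        · exact hpt u hu
    _ = 2 * C * ∫ u in Ioo (0 : ℝ) 1, g u := by
        have hsymm := setIntegral_Ioo_comp_add_sub g zero_le_one
        rw [zero_add] at hsymm
        rw [integral_const_mul, integral_add hg hg', hsymm]
        ring

theorem min_one_div_rpow_of_le {a p u : ℝ} (hu : 0 < u) (hua : u ≤ a) (hp : 0 ≤ p) :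
    min 1 ((a / u) ^ p) = 1 :=
  min_eq_left (one_le_rpow ((one_le_div hu).mpr hua) hp)

theorem min_one_div_rpow_of_ge {a p u : ℝ} (ha : 0 < a) (hau : a ≤ u) (hp : 0 ≤ p) :
    min 1 ((a / u) ^ p) = a ^ p * u ^ (-p) := by
  have hu : 0 < u := ha.trans_le hau
  rw [min_eq_right (rpow_le_one (by positivity) ((div_le_one hu).mpr hau) hp),
    div_rpow ha.le hu.le, rpow_neg hu.le, div_eq_mul_inv]

theorem integrableOn_Ioi_min_one_div_rpow {a p : ℝ} (ha : 0 < a) (hp : 1 < p) :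
    IntegrableOn (fun u => min 1 ((a / u) ^ p)) (Ioi 0) := by
  rw [← Ioc_union_Ioi_eq_Ioi ha.le, integrableOn_union]
  constructor
  · refine (integrableOn_const (C := 1) measure_Ioc_lt_top.ne).congr_fun (fun u hu => ?_)
      measurableSet_Ioc
    exact (min_one_div_rpow_of_le hu.1 hu.2 (by linarith)).symm
  · refine IntegrableOn.congr_fun
      ((integrableOn_Ioi_rpow_of_lt (a := -p) (by linarith) ha).const_mul (a ^ p))
      (fun u hu => ?_) measurableSet_Ioi
    exact (min_one_div_rpow_of_ge ha hu.le (by linarith)).symm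

theorem integral_Ioi_min_one_div_rpow {a p : ℝ} (ha : 0 < a) (hp : 1 < p) :
    ∫ u in Ioi 0, min 1 ((a / u) ^ p) = a * (p / (p - 1)) := by
  have hint := integrableOn_Ioi_min_one_div_rpow ha hp
  rw [← Ioc_union_Ioi_eq_Ioi ha.le] at hint ⊢
  rw [setIntegral_union Ioc_disjoint_Ioi_same measurableSet_Ioi hint.left_of_union
      hint.right_of_union,
    setIntegral_congr_fun measurableSet_Ioc
      (fun u hu => min_one_div_rpow_of_le hu.1 hu.2 (by linarith)),
    setIntegral_congr_fun measurableSet_Ioi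
      (fun u hu => min_one_div_rpow_of_ge ha (le_of_lt hu) (by linarith)),
    integral_const_mul, integral_Ioi_rpow_of_lt (by linarith) ha, setIntegral_const,
    Real.volume_real_Ioc_of_le ha.le, ← mul_div_assoc, mul_neg, ← rpow_add ha,
    add_neg_cancel_left, rpow_one]
  have : -p + 1 ≠ 0 := by linarith
  have : p - 1 ≠ 0 := by linarith
  field_simp
  ring

theorem mul_rpow_neg_eq_div_rpow {c x p : ℝ} (hc : 0 ≤ c) (hx : 0 ≤ x) (hp : p ≠ 0) :
    c * x ^ (-p) = (c ^ (1 / p) / x) ^ p := by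
  rw [div_rpow (by positivity) hx, ← rpow_mul hc, one_div_mul_cancel hp, rpow_one, rpow_neg hx,
    div_eq_mul_inv]

theorem charfun_bound_increment
    (φ : ℝ → ℂ) (p c : ℝ) (hp : 1 < p) (hc : 0 < c)
    (hbd1 : ∀ t : ℝ, ‖φ t‖ ≤ 1)
    (hineq : ∀ t : ℝ, 0 < t →
      ‖φ t‖ ≤ ∫ u in Ioo (0:ℝ) 1, ‖φ (u * t)‖ * ‖φ ((1 - u) * t)‖)
    (hbd : ∀ t : ℝ, 0 < t → ‖φ t‖ ≤ c * t ^ (-p)) :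
    ∀ t : ℝ, 0 < t →
      ‖φ t‖ ≤ 2 ^ (p + 1) * c ^ (1 + 1/p) * (p / (p - 1)) * t ^ (-(p + 1)) := by
  intro t ht
  set a := c ^ (1 / p) / t
  have ha : 0 < a := by positivity
  have hφa : ∀ u ∈ Ioo (0 : ℝ) 1, 0 ≤ ‖φ (u * t)‖ ∧ ‖φ (u * t)‖ ≤ min 1 ((a / u) ^ p) := by
    refine fun u hu => ⟨norm_nonneg _, le_min (hbd1 _) ((hbd _ (mul_pos hu.1 ht)).trans_eq ?_)⟩
    rw [mul_rpow_neg_eq_div_rpow hc.le (mul_pos hu.1 ht).le (by linarith), div_div, mul_comm t]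
  have hφC : ∀ u ∈ Ico (1 / 2 : ℝ) 1, ‖φ (u * t)‖ ≤ c * (t / 2) ^ (-p) := fun u hu =>
    (hbd _ (by nlinarith [hu.1])).trans <| mul_le_mul_of_nonneg_left
      (rpow_le_rpow_of_nonpos (by positivity) (by nlinarith [hu.1]) (by linarith)) hc.le
  have hint := integrableOn_Ioi_min_one_div_rpow ha hp
  calc ‖φ t‖ ≤ ∫ u in Ioo (0:ℝ) 1, ‖φ (u * t)‖ * ‖φ ((1 - u) * t)‖ := hineq t ht
    _ ≤ 2 * (c * (t / 2) ^ (-p)) * ∫ u in Ioo (0 : ℝ) 1, min 1 ((a / u) ^ p) :=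
        setIntegral_Ioo_mul_comp_one_sub_le (by positivity) hφa hφC
          (hint.mono_set Ioo_subset_Ioi_self)
    _ ≤ 2 * (c * (t / 2) ^ (-p)) * ∫ u in Ioi 0, min 1 ((a / u) ^ p) := by
        refine mul_le_mul_of_nonneg_left (setIntegral_mono_set hint ?_
          Ioo_subset_Ioi_self.eventuallyLE) (by positivity)
        filter_upwards [ae_restrict_mem measurableSet_Ioi] with u (hu : 0 < u)
        positivity
    _ = 2 ^ (p + 1) * c ^ (1 + 1/p) * (p / (p - 1)) * t ^ (-(p + 1)) := by
        rw [integral_Ioi_min_one_div_rpow ha hp, div_rpow ht.le zero_le_two,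
          rpow_neg zero_le_two, rpow_add two_pos, rpow_add hc, neg_add, rpow_add ht,
          rpow_neg_one, rpow_one, rpow_one]
        simp only [a]
        field_simp
end

section
/- Let φ be the characteristic function of the limiting Quicksort distribution (satisfying the fixed point equation Y =_d UY + (1-U)Z + g(U) as above). Then the constants c_p := sup_{t>0} t^p |φ(t)| satisfy c_p ≤ 2^{p² + 6p} for all p > 0. -/
/-!
Let `ν` be the law of `Y`. Integrating out `Y` and `Z` in the fixed-point equation gives
`φ t = ∫₀¹ φ (u t) φ ((1 - u) t) exp (i t g u) du`, hence
`‖φ t‖ ≤ ∫₀¹ ‖φ (u t)‖ ‖φ ((1 - u) t)‖ du`. Integrating out `U` first instead, `φ t` is an average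
of oscillatory integrals `∫₀¹ exp (i t (u y + (1 - u) z + g u)) du` whose phase has second
derivative at least `8 t`, so van der Corput's lemma gives `‖φ t‖ ≤ 2 / √t`. Feeding a bound
`‖φ s‖ ≤ B s ^ (-p)` into the convolution inequality improves it to
`‖φ t‖ ≤ 2 ^ (p + 3) B t ^ (-(p + 1/2))`; starting from `‖φ‖ ≤ 1` this yields
`‖φ t‖ ≤ 2 ^ ((m² + 11 m) / 4) t ^ (-m/2)` for every `m : ℕ`, and `m = ⌈2 p⌉` gives the claim
for `t > 2 ^ (p + 6)`, while `‖φ‖ ≤ 1` suffices below that threshold.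
-/

open Set Real MeasureTheory ProbabilityTheory
open scoped Complex
open Complex (I)

/-! ### Van der Corput's lemma -/

lemma abs_inv_add_abs_inv_add_inv_sub_inv_le {x y δ : ℝ} (hδ : 0 < δ) (hxy : x ≤ y)
    (hx : δ ≤ |x|) (hy : δ ≤ |y|) : |x⁻¹| + |y⁻¹| + (x⁻¹ - y⁻¹) ≤ 2 / δ := by
  have hx' : |x|⁻¹ ≤ δ⁻¹ := inv_anti₀ hδ hx
  have hy' : |y|⁻¹ ≤ δ⁻¹ := inv_anti₀ hδ hy
  have hx0 : x ≠ 0 := abs_pos.mp (hδ.trans_le hx)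
  have hy0 : y ≠ 0 := abs_pos.mp (hδ.trans_le hy)
  rw [abs_inv, abs_inv, div_eq_mul_inv]
  rcases hx0.lt_or_gt with hxn | hxp <;> rcases hy0.lt_or_gt with hyn | hyp
  · rw [abs_of_neg hxn, abs_of_neg hyn, inv_neg, inv_neg] at *
    linarith
  · rw [abs_of_neg hxn, abs_of_pos hyp] at *
    rw [inv_neg]
    linarith [inv_pos.mpr hδ]
  · linarith
  · rw [abs_of_pos hxp, abs_of_pos hyp] at *
    linarith

lemma norm_integral_ofReal_mul_cexp_mul_I_le_sub {a a' ψ : ℝ → ℝ} {w v : ℝ} (hwv : w ≤ v)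
    (ha : ∀ u ∈ uIcc w v, HasDerivAt a (a' u) u) (ha'_cont : ContinuousOn a' (uIcc w v))
    (ha'_nonpos : ∀ u ∈ Icc w v, a' u ≤ 0) :
    ‖∫ u in w..v, (a' u : ℂ) * cexp (ψ u * I)‖ ≤ a w - a v := by
  calc _ ≤ ∫ u in w..v, ‖(a' u : ℂ) * cexp (ψ u * I)‖ :=
        intervalIntegral.norm_integral_le_integral_norm hwv
    _ = ∫ u in w..v, -a' u := by
        refine intervalIntegral.integral_congr fun u hu => ?_
        simp only [norm_mul, Complex.norm_exp_ofReal_mul_I, mul_one, Complex.norm_real,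
          norm_eq_abs]
        exact abs_of_nonpos (ha'_nonpos u (uIcc_of_le hwv ▸ hu))
    _ = a w - a v := by
        rw [intervalIntegral.integral_neg,
          intervalIntegral.integral_eq_sub_of_hasDerivAt ha ha'_cont.intervalIntegrable]
        ring

theorem norm_integral_cexp_mul_I_le_of_deriv_ne_zero {ψ ψ' ψ'' : ℝ → ℝ} {w v : ℝ}
    (hwv : w ≤ v)
    (hψ : ∀ u ∈ Icc w v, HasDerivAt ψ (ψ' u) u)
    (hψ' : ∀ u ∈ Icc w v, HasDerivAt ψ' (ψ'' u) u)
    (hψ''_cont : ContinuousOn ψ'' (Icc w v)) (hψ''_nonneg : ∀ u ∈ Icc w v, 0 ≤ ψ'' u)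
    (hne : ∀ u ∈ Icc w v, ψ' u ≠ 0) :
    ‖∫ u in w..v, cexp (ψ u * I)‖ ≤ |(ψ' w)⁻¹| + |(ψ' v)⁻¹| + ((ψ' w)⁻¹ - (ψ' v)⁻¹) := by
  have hψ'_cont : ContinuousOn ψ' (Icc w v) := fun u hu =>
    (hψ' u hu).continuousAt.continuousWithinAt
  -- integrate by parts, using `(ψ')⁻¹ * (exp (i ψ))' = i exp (i ψ)`
  have hinv : ∀ u ∈ uIcc w v, HasDerivAt (fun x => (ψ' x)⁻¹) (-ψ'' u / ψ' u ^ 2) u :=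
    fun u hu => (hψ' u (uIcc_of_le hwv ▸ hu)).inv (hne u (uIcc_of_le hwv ▸ hu))
  have hinv_cont : ContinuousOn (fun u => -ψ'' u / ψ' u ^ 2) (uIcc w v) := by
    rw [uIcc_of_le hwv]
    exact hψ''_cont.neg.div (hψ'_cont.pow 2) fun u hu => pow_ne_zero _ (hne u hu)
  have hexp : ∀ u ∈ uIcc w v,
      HasDerivAt (fun x => cexp (ψ x * I)) (cexp (ψ u * I) * (ψ' u * I)) u :=
    fun u hu => ((hψ u (uIcc_of_le hwv ▸ hu)).ofReal_comp.mul_const I).cexp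
  have hexp_cont : ContinuousOn (fun u => cexp (ψ u * I) * (ψ' u * I)) (uIcc w v) := by
    have hψ_cont : ContinuousOn ψ (Icc w v) := fun u hu =>
      (hψ u hu).continuousAt.continuousWithinAt
    rw [uIcc_of_le hwv]
    fun_prop
  have hparts := intervalIntegral.integral_mul_deriv_eq_deriv_mul
    (fun u hu => (hinv u hu).ofReal_comp) hexp
    ((Complex.continuous_ofReal.comp_continuousOn hinv_cont).intervalIntegrable)
    hexp_cont.intervalIntegrable
  have hlhs : ∫ u in w..v, (((ψ' u)⁻¹ : ℝ) : ℂ) * (cexp (ψ u * I) * (ψ' u * I))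
      = I * ∫ u in w..v, cexp (ψ u * I) := by
    rw [← intervalIntegral.integral_const_mul]
    refine intervalIntegral.integral_congr fun u hu => ?_
    have : (ψ' u : ℂ) ≠ 0 := Complex.ofReal_ne_zero.mpr (hne u (uIcc_of_le hwv ▸ hu))
    push_cast
    field_simp
  have hrem := norm_integral_ofReal_mul_cexp_mul_I_le_sub (ψ := ψ) hwv hinv hinv_cont
    fun u hu => div_nonpos_of_nonpos_of_nonneg (neg_nonpos.mpr (hψ''_nonneg u hu)) (sq_nonneg _)
  calc ‖∫ u in w..v, cexp (ψ u * I)‖ = ‖I * ∫ u in w..v, cexp (ψ u * I)‖ := by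
        rw [norm_mul, Complex.norm_I, one_mul]
    _ ≤ |(ψ' v)⁻¹| + |(ψ' w)⁻¹| + ((ψ' w)⁻¹ - (ψ' v)⁻¹) := by
        rw [← hlhs, hparts]
        refine (norm_sub_le _ _).trans (add_le_add ((norm_sub_le _ _).trans_eq ?_) hrem)
        simp only [norm_mul, Complex.norm_exp_ofReal_mul_I, mul_one, Complex.norm_real,
          norm_eq_abs]
    _ = |(ψ' w)⁻¹| + |(ψ' v)⁻¹| + ((ψ' w)⁻¹ - (ψ' v)⁻¹) := by ring

theorem norm_integral_cexp_mul_I_le_of_le_abs_deriv {ψ ψ' ψ'' : ℝ → ℝ} {w v δ : ℝ}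
    (hwv : w ≤ v) (hδ : 0 < δ)
    (hψ : ∀ u ∈ Icc w v, HasDerivAt ψ (ψ' u) u)
    (hψ' : ∀ u ∈ Icc w v, HasDerivAt ψ' (ψ'' u) u)
    (hψ''_cont : ContinuousOn ψ'' (Icc w v)) (hψ''_nonneg : ∀ u ∈ Icc w v, 0 ≤ ψ'' u)
    (hψ'_ge : ∀ u ∈ Icc w v, δ ≤ |ψ' u|) :
    ‖∫ u in w..v, cexp (ψ u * I)‖ ≤ 2 / δ := by
  have hmono : ψ' w ≤ ψ' v :=
    monotoneOn_of_deriv_nonneg (convex_Icc w v)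
      (fun u hu => (hψ' u hu).continuousAt.continuousWithinAt)
      (fun u hu => (hψ' u (interior_subset hu)).differentiableAt.differentiableWithinAt)
      (fun u hu => (hψ' u (interior_subset hu)).deriv ▸ hψ''_nonneg u (interior_subset hu))
      (left_mem_Icc.mpr hwv) (right_mem_Icc.mpr hwv) hwv
  exact (norm_integral_cexp_mul_I_le_of_deriv_ne_zero hwv hψ hψ' hψ''_cont hψ''_nonneg
    fun u hu => abs_pos.mp (hδ.trans_le (hψ'_ge u hu))).trans
    (abs_inv_add_abs_inv_add_inv_sub_inv_le hδ hmono (hψ'_ge w (left_mem_Icc.mpr hwv))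
      (hψ'_ge v (right_mem_Icc.mpr hwv)))

lemma norm_intervalIntegral_le_of_forall_Ioo {E : Type*} [NormedAddCommGroup E]
    [NormedSpace ℝ E] {F : ℝ → E} (hF : ∀ a b, IntervalIntegrable F volume a b) {l r C : ℝ}
    (hlr : l < r) (h : ∀ w ∈ Ioo l r, ∀ v ∈ Ioo l r, w ≤ v → ‖∫ x in w..v, F x‖ ≤ C) :
    ‖∫ x in l..r, F x‖ ≤ C := by
  have hcont : Continuous fun q : ℝ × ℝ => ∫ x in q.1..q.2, F x := by
    have := intervalIntegral.continuous_primitive hF l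
    refine ((this.comp continuous_snd).sub (this.comp continuous_fst)).congr fun q => ?_
    exact intervalIntegral.integral_interval_sub_left (hF l _) (hF l _)
  have hsub : Ioo l r ×ˢ Ioo l r ⊆ {q | ‖∫ x in q.1..q.2, F x‖ ≤ C} := by
    rintro ⟨w, v⟩ ⟨hw, hv⟩
    rcases le_total w v with hwv | hvw
    · exact h w hw v hv hwv
    · simpa [intervalIntegral.integral_symm w v] using h v hv w hw hvw
  have hclosed := (isClosed_le hcont.norm continuous_const).closure_subset_iff.mpr hsub
  rw [closure_prod_eq, closure_Ioo hlr.ne] at hclosed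
  exact hclosed (show (l, r) ∈ Icc l r ×ˢ Icc l r from
    ⟨left_mem_Icc.mpr hlr.le, right_mem_Icc.mpr hlr.le⟩)

lemma intervalIntegrable_cexp_mul_I {ψ : ℝ → ℝ} (hψ : Measurable ψ) (a b : ℝ) :
    IntervalIntegrable (fun u => cexp (ψ u * I)) volume a b :=
  (intervalIntegrable_const (c := (1 : ℝ))).mono_fun' (by fun_prop)
    (ae_of_all _ fun u => (Complex.norm_exp_ofReal_mul_I _).le)

theorem norm_integral_cexp_mul_I_le_of_le_abs_deriv_Ioo {ψ ψ' ψ'' : ℝ → ℝ} {l r δ : ℝ}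
    (hψ_meas : Measurable ψ) (hlr : l < r) (hδ : 0 < δ)
    (hψ : ∀ u ∈ Ioo l r, HasDerivAt ψ (ψ' u) u)
    (hψ' : ∀ u ∈ Ioo l r, HasDerivAt ψ' (ψ'' u) u)
    (hψ''_cont : ContinuousOn ψ'' (Ioo l r)) (hψ''_nonneg : ∀ u ∈ Ioo l r, 0 ≤ ψ'' u)
    (hψ'_ge : ∀ u ∈ Ioo l r, δ ≤ |ψ' u|) :
    ‖∫ u in l..r, cexp (ψ u * I)‖ ≤ 2 / δ := by
  refine norm_intervalIntegral_le_of_forall_Ioo (intervalIntegrable_cexp_mul_I hψ_meas) hlr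
    fun w hw v hv hwv => ?_
  have hsub : Icc w v ⊆ Ioo l r := Icc_subset_Ioo hw.1 hv.2
  exact norm_integral_cexp_mul_I_le_of_le_abs_deriv hwv hδ (fun u hu => hψ u (hsub hu))
    (fun u hu => hψ' u (hsub hu)) (hψ''_cont.mono hsub) (fun u hu => hψ''_nonneg u (hsub hu))
    (fun u hu => hψ'_ge u (hsub hu))

theorem norm_integral_cexp_mul_I_le_of_le_deriv2 {ψ ψ' ψ'' : ℝ → ℝ} {l r a b κ δ : ℝ}
    (hψ_meas : Measurable ψ) (hκ : 0 < κ) (hδ : 0 < δ)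
    (hψ : ∀ u ∈ Ioo l r, HasDerivAt ψ (ψ' u) u)
    (hψ' : ∀ u ∈ Ioo l r, HasDerivAt ψ' (ψ'' u) u)
    (hψ''_cont : ContinuousOn ψ'' (Ioo l r)) (hψ''_ge : ∀ u ∈ Ioo l r, κ ≤ ψ'' u)
    (ha : a ∈ Ioo l r) (hb : b ∈ Ioo l r) (hψ'a : ψ' a = -δ) (hψ'b : ψ' b = δ) :
    ‖∫ u in l..r, cexp (ψ u * I)‖ ≤ 4 / δ + 2 * δ / κ := by
  have hgap : ∀ x ∈ Ioo l r, ∀ y ∈ Ioo l r, x ≤ y → κ * (y - x) ≤ ψ' y - ψ' x :=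
    (convex_Ioo l r).mul_sub_le_image_sub_of_le_deriv
      (fun u hu => (hψ' u hu).continuousAt.continuousWithinAt)
      (fun u hu => (hψ' u (interior_subset hu)).differentiableAt.differentiableWithinAt)
      (fun u hu => (hψ' u (interior_subset hu)).deriv ▸ hψ''_ge u (interior_subset hu))
  have hab : a ≤ b := by
    by_contra! hba
    have := hgap b hb a ha hba.le
    nlinarith
  have hψ''_nonneg : ∀ u ∈ Ioo l r, 0 ≤ ψ'' u := fun u hu => hκ.le.trans (hψ''_ge u hu)
  have hleft : ‖∫ u in l..a, cexp (ψ u * I)‖ ≤ 2 / δ := by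
    have hsub : Ioo l a ⊆ Ioo l r := Ioo_subset_Ioo_right ha.2.le
    refine norm_integral_cexp_mul_I_le_of_le_abs_deriv_Ioo hψ_meas ha.1 hδ
      (fun u hu => hψ u (hsub hu)) (fun u hu => hψ' u (hsub hu)) (hψ''_cont.mono hsub)
      (fun u hu => hψ''_nonneg u (hsub hu)) fun u hu => ?_
    have := hgap u (hsub hu) a ha hu.2.le
    rw [abs_of_neg] <;> nlinarith [hu.2]
  have hright : ‖∫ u in b..r, cexp (ψ u * I)‖ ≤ 2 / δ := by
    have hsub : Ioo b r ⊆ Ioo l r := Ioo_subset_Ioo_left hb.1.le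
    refine norm_integral_cexp_mul_I_le_of_le_abs_deriv_Ioo hψ_meas hb.2 hδ
      (fun u hu => hψ u (hsub hu)) (fun u hu => hψ' u (hsub hu)) (hψ''_cont.mono hsub)
      (fun u hu => hψ''_nonneg u (hsub hu)) fun u hu => ?_
    have := hgap b hb u (hsub hu) hu.1.le
    rw [abs_of_pos] <;> nlinarith [hu.1]
  -- near the stationary point, where `|ψ'| < δ`, only the trivial bound is available
  have hmid : ‖∫ u in a..b, cexp (ψ u * I)‖ ≤ 2 * δ / κ := by
    have := hgap a ha b hb hab
    calc _ ≤ 1 * |b - a| := intervalIntegral.norm_integral_le_of_norm_le_const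
          fun u _ => (Complex.norm_exp_ofReal_mul_I _).le
      _ ≤ 2 * δ / κ := by
          rw [one_mul, abs_of_nonneg (sub_nonneg.mpr hab), le_div_iff₀ hκ]
          linarith
  have hF := intervalIntegrable_cexp_mul_I hψ_meas
  rw [← intervalIntegral.integral_add_adjacent_intervals (hF l a) (hF a r),
    ← intervalIntegral.integral_add_adjacent_intervals (hF a b) (hF b r)]
  calc _ ≤ ‖∫ u in l..a, cexp (ψ u * I)‖ + (‖∫ u in a..b, cexp (ψ u * I)‖
        + ‖∫ u in b..r, cexp (ψ u * I)‖) :=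
          (norm_add_le _ _).trans (by gcongr; exact norm_add_le _ _)
    _ ≤ 2 / δ + (2 * δ / κ + 2 / δ) := by gcongr
    _ = 4 / δ + 2 * δ / κ := by ring

/-! ### The Quicksort fixed-point equation -/

lemma log_sigmoid_sub_log_one_sub_sigmoid (x : ℝ) :
    log (sigmoid x) - log (1 - sigmoid x) = x := by
  rw [← sigmoid_neg, ← sigmoid_mul_rexp_neg,
    log_mul (sigmoid_pos x).ne' (exp_pos _).ne', log_exp]
  ring

lemma four_le_inv_add_inv_one_sub {u : ℝ} (hu : u ∈ Ioo 0 1) : 4 ≤ u⁻¹ + (1 - u)⁻¹ := by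
  have h1u : 0 < 1 - u := sub_pos.mpr hu.2
  rw [inv_add_inv hu.1.ne' h1u.ne', le_div_iff₀ (mul_pos hu.1 h1u)]
  nlinarith [sq_nonneg (2 * u - 1)]

theorem norm_integral_cexp_binEntropy_phase_le {t : ℝ} (ht : 0 < t) (y z : ℝ) :
    ‖∫ u in (0:ℝ)..1, cexp ((t * (u * y + (1 - u) * z + (1 - 2 * binEntropy u)) : ℝ) * I)‖
      ≤ 2 / √t := by
  set ψ' : ℝ → ℝ := fun u => t * (y - z + 2 * (log u - log (1 - u)))
  have hψ : ∀ u ∈ Ioo (0:ℝ) 1, HasDerivAt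
      (fun u => t * (u * y + (1 - u) * z + (1 - 2 * binEntropy u))) (ψ' u) u := by
    intro u hu
    have := (((hasDerivAt_id u).mul_const y).add (((hasDerivAt_id u).const_sub 1).mul_const z)).add
      (((hasDerivAt_binEntropy hu.1.ne' hu.2.ne).const_mul 2).const_sub 1)
    refine (this.const_mul t).congr_deriv ?_
    simp only [ψ']
    ring
  have hψ' : ∀ u ∈ Ioo (0:ℝ) 1, HasDerivAt ψ' (t * (2 * (u⁻¹ + (1 - u)⁻¹))) u := by
    intro u hu
    have := ((hasDerivAt_log hu.1.ne').sub
      (((hasDerivAt_id u).const_sub 1).log (sub_pos.mpr hu.2).ne')).const_mul 2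
    refine ((this.const_add (y - z)).const_mul t).congr_deriv ?_
    simp only [id]
    ring
  have hψ''_cont : ContinuousOn (fun u : ℝ => t * (2 * (u⁻¹ + (1 - u)⁻¹))) (Ioo 0 1) :=
    continuousOn_const.mul (continuousOn_const.mul
      ((continuousOn_inv₀.mono fun u hu => hu.1.ne').add
        ((continuousOn_inv₀.comp (continuousOn_const.sub continuousOn_id) fun u hu =>
          (sub_pos.mpr hu.2).ne'))))
  have hψ''_ge : ∀ u ∈ Ioo (0:ℝ) 1, 8 * t ≤ t * (2 * (u⁻¹ + (1 - u)⁻¹)) := fun u hu => by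
    nlinarith [four_le_inv_add_inv_one_sub hu]
  -- the points where `ψ' = ∓ δ` are explicit, since `sigmoid` inverts `log u - log (1 - u)`
  have hψ'_sigmoid : ∀ s, ψ' (sigmoid ((s / t - (y - z)) / 2)) = s := by
    intro s
    simp only [ψ', log_sigmoid_sub_log_one_sub_sigmoid]
    field_simp
    ring
  have hδ : 0 < 4 * √t := by positivity
  calc _ ≤ 4 / (4 * √t) + 2 * (4 * √t) / (8 * t) :=
        norm_integral_cexp_mul_I_le_of_le_deriv2 (by fun_prop) (by positivity) hδ hψ hψ'
          hψ''_cont hψ''_ge ⟨sigmoid_pos _, sigmoid_lt_one _⟩ ⟨sigmoid_pos _, sigmoid_lt_one _⟩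
          (hψ'_sigmoid _) (hψ'_sigmoid _)
    _ = 2 / √t := by
        have := sq_sqrt ht.le
        field_simp
        linarith

def quicksortMap (g : ℝ → ℝ) (q : (ℝ × ℝ) × ℝ) : ℝ := q.2 * q.1.1 + (1 - q.2) * q.1.2 + g q.2

@[fun_prop]
lemma measurable_quicksortMap {g : ℝ → ℝ} (hg : Measurable g) : Measurable (quicksortMap g) := by
  unfold quicksortMap
  fun_prop

lemma integrable_cexp_mul_mul_I {α : Type*} [MeasurableSpace α] {μ : Measure α}
    [IsFiniteMeasure μ] {h : α → ℝ} (hh : Measurable h) (t : ℝ) :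
    Integrable (fun x => cexp (t * h x * I)) μ :=
  (integrable_const (1 : ℝ)).mono' (by fun_prop)
    (ae_of_all _ fun x => by simpa using (Complex.norm_exp_ofReal_mul_I (t * h x)).le)

lemma map_prodMk_prodMk_eq_of_iIndepFun {Ω β : Type*} [MeasurableSpace Ω] [MeasurableSpace β]
    {μ : Measure Ω} [IsFiniteMeasure μ] {X Y Z : Ω → β}
    (hX : Measurable X) (hY : Measurable Y) (hZ : Measurable Z) (hindep : iIndepFun ![X, Y, Z] μ) :
    μ.map (fun ω => ((X ω, Y ω), Z ω)) = ((μ.map X).prod (μ.map Y)).prod (μ.map Z) := by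
  have hmeas : ∀ i, Measurable (![X, Y, Z] i) := fun i => by fin_cases i <;> assumption
  rw [(hindep.indepFun_prodMk hmeas 0 1 2 (by decide) (by decide)).map_prod_eq_prod_map_map
      (hX.prodMk hY).aemeasurable hZ.aemeasurable,
    (hindep.indepFun (show (0 : Fin 3) ≠ 1 by decide)).map_prod_eq_prod_map_map
      hX.aemeasurable hY.aemeasurable]

lemma charFun_map_quicksortMap (ν ρ : Measure ℝ) [IsProbabilityMeasure ν]
    [IsProbabilityMeasure ρ] {g : ℝ → ℝ} (hg : Measurable g) (t : ℝ) :
    charFun (((ν.prod ν).prod ρ).map (quicksortMap g)) t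
      = ∫ u, charFun ν (u * t) * charFun ν ((1 - u) * t) * cexp (t * g u * I) ∂ρ := by
  rw [charFun_apply_real, integral_map (measurable_quicksortMap hg).aemeasurable (by fun_prop),
    integral_prod_symm _ (integrable_cexp_mul_mul_I (measurable_quicksortMap hg) t)]
  refine integral_congr_ae (ae_of_all _ fun u => ?_)
  simp only [charFun_apply_real]
  rw [← integral_prod_mul, ← integral_mul_const]
  refine integral_congr_ae (ae_of_all _ fun p => ?_)
  simp only [← Complex.exp_add, quicksortMap]
  push_cast
  ring_nf

instance : IsProbabilityMeasure (volume.restrict (Ioo (0:ℝ) 1)) := ⟨by simp⟩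

theorem norm_charFun_map_quicksortMap_binEntropy_le (ν : Measure ℝ) [IsProbabilityMeasure ν]
    {t : ℝ} (ht : 0 < t) :
    ‖charFun (((ν.prod ν).prod (volume.restrict (Ioo (0:ℝ) 1))).map
      (quicksortMap fun u => 1 - 2 * binEntropy u)) t‖ ≤ 2 / √t := by
  rw [charFun_apply_real, integral_map (measurable_quicksortMap (by fun_prop)).aemeasurable
      (by fun_prop),
    integral_prod _ (integrable_cexp_mul_mul_I (by fun_prop) t)]
  refine (norm_integral_le_of_norm_le_const (C := 2 / √t) (ae_of_all _ fun p => ?_)).trans_eq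
    (by simp)
  rw [← integral_Ioc_eq_integral_Ioo, ← intervalIntegral.integral_of_le zero_le_one]
  refine (congrArg _ (intervalIntegral.integral_congr fun u _ => ?_)).trans_le
    (norm_integral_cexp_binEntropy_phase_le ht p.1 p.2)
  push_cast [quicksortMap]
  ring_nf

theorem norm_charFun_le_integral_of_eq_map_quicksortMap {ν : Measure ℝ} [IsProbabilityMeasure ν]
    {g : ℝ → ℝ} (hg : Measurable g)
    (hfix : ν = ((ν.prod ν).prod (volume.restrict (Ioo (0:ℝ) 1))).map (quicksortMap g)) (t : ℝ) :
    ‖charFun ν t‖ ≤ ∫ u in (0:ℝ)..1, ‖charFun ν (u * t)‖ * ‖charFun ν ((1 - u) * t)‖ := by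
  nth_rewrite 1 [hfix]
  rw [charFun_map_quicksortMap _ _ hg, intervalIntegral.integral_of_le zero_le_one,
    integral_Ioc_eq_integral_Ioo]
  refine (norm_integral_le_integral_norm _).trans_eq (integral_congr_ae (ae_of_all _ fun u => ?_))
  dsimp only
  rw [norm_mul, norm_mul, ← Complex.ofReal_mul, Complex.norm_exp_ofReal_mul_I, mul_one]

/-! ### Bootstrapping the decay -/

lemma mul_le_mul_add_of_le_or_le {a b K : ℝ} (ha : 0 ≤ a) (hb : 0 ≤ b) (h : a ≤ K ∨ b ≤ K) :
    a * b ≤ K * (a + b) := by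
  rcases h with h | h <;> nlinarith

section Bootstrap

variable {f : ℝ → ℝ}

lemma integral_comp_mul_le_of_le_div_sqrt (hf : Continuous f) {C : ℝ}
    (hdecay : ∀ s, 0 < s → f s ≤ C / √s) {t : ℝ} (ht : 0 < t) :
    ∫ u in (0:ℝ)..1, f (u * t) ≤ 2 * C / √t := by
  have hrpow : ∫ u in (0:ℝ)..1, u ^ (-(1 / 2) : ℝ) = 2 := by
    rw [integral_rpow (by norm_num)]; norm_num
  calc ∫ u in (0:ℝ)..1, f (u * t)
      ≤ ∫ u in (0:ℝ)..1, C / √t * u ^ (-(1 / 2) : ℝ) := by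
        refine intervalIntegral.integral_mono_on_of_le_Ioo zero_le_one
          ((hf.comp (continuous_id.mul continuous_const)).intervalIntegrable _ _)
          ((intervalIntegral.intervalIntegrable_rpow' (by norm_num)).const_mul _) fun u hu => ?_
        rw [rpow_neg hu.1.le, ← sqrt_eq_rpow]
        calc f (u * t) ≤ C / √(u * t) := hdecay _ (mul_pos hu.1 ht)
          _ = C / √t * (√u)⁻¹ := by rw [sqrt_mul hu.1.le]; ring
    _ = 2 * C / √t := by rw [intervalIntegral.integral_const_mul, hrpow]; ring

lemma le_rpow_neg_add_half_of_le_rpow_neg (hf : Continuous f) (hf_nonneg : ∀ s, 0 ≤ f s)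
    (hdecay : ∀ s, 0 < s → f s ≤ 2 / √s)
    (hconv : ∀ t, 0 < t → f t ≤ ∫ u in (0:ℝ)..1, f (u * t) * f ((1 - u) * t))
    {p B : ℝ} (hp : 0 ≤ p) (hB : 0 ≤ B) (hbound : ∀ s, 0 < s → f s ≤ B * s ^ (-p))
    {t : ℝ} (ht : 0 < t) : f t ≤ 2 ^ (p + 3) * B * t ^ (-(p + 1 / 2)) := by
  set K := B * (t / 2) ^ (-p)
  have hK : ∀ s, t / 2 ≤ s → f s ≤ K := fun s hs =>
    (hbound s (by linarith)).trans <| mul_le_mul_of_nonneg_left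
      (rpow_le_rpow_of_nonpos (by positivity) hs (by linarith)) hB
  -- one of the two factors has argument at least `t / 2`
  have hprod : ∀ u ∈ Icc (0:ℝ) 1,
      f (u * t) * f ((1 - u) * t) ≤ K * (f (u * t) + f ((1 - u) * t)) := fun u hu =>
    mul_le_mul_add_of_le_or_le (hf_nonneg _) (hf_nonneg _) <|
      (le_total (1 / 2) u).imp (fun h => hK _ (by nlinarith)) (fun h => hK _ (by nlinarith))
  have hcomp : Continuous fun u => f (u * t) := hf.comp (continuous_id.mul continuous_const)
  have hcomp' : Continuous fun u => f ((1 - u) * t) :=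
    hf.comp ((continuous_const.sub continuous_id).mul continuous_const)
  have hrefl : ∫ u in (0:ℝ)..1, f ((1 - u) * t) = ∫ u in (0:ℝ)..1, f (u * t) := by
    simpa using intervalIntegral.integral_comp_sub_left (a := 0) (b := 1) (fun u => f (u * t)) 1
  calc f t ≤ ∫ u in (0:ℝ)..1, f (u * t) * f ((1 - u) * t) := hconv t ht
    _ ≤ ∫ u in (0:ℝ)..1, K * (f (u * t) + f ((1 - u) * t)) :=
        intervalIntegral.integral_mono_on zero_le_one
          ((hcomp.mul hcomp').intervalIntegrable _ _)
          ((continuous_const.mul (hcomp.add hcomp')).intervalIntegrable _ _) hprod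
    _ = 2 * K * ∫ u in (0:ℝ)..1, f (u * t) := by
        rw [intervalIntegral.integral_const_mul, intervalIntegral.integral_add
          (hcomp.intervalIntegrable _ _) (hcomp'.intervalIntegrable _ _), hrefl]
        ring
    _ ≤ 2 * K * (2 * 2 / √t) :=
        mul_le_mul_of_nonneg_left (integral_comp_mul_le_of_le_div_sqrt hf hdecay ht)
          (by positivity)
    _ = 2 ^ (p + 3) * B * t ^ (-(p + 1 / 2)) := by
        simp only [K]
        rw [div_rpow ht.le zero_le_two, rpow_add two_pos, neg_add, rpow_add ht,
          rpow_neg zero_le_two, rpow_neg ht.le (1 / 2), ← sqrt_eq_rpow]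
        norm_num
        field_simp
        ring

lemma le_two_rpow_mul_rpow_neg_half (hf : Continuous f) (hf_nonneg : ∀ s, 0 ≤ f s)
    (hf_le_one : ∀ s, f s ≤ 1) (hdecay : ∀ s, 0 < s → f s ≤ 2 / √s)
    (hconv : ∀ t, 0 < t → f t ≤ ∫ u in (0:ℝ)..1, f (u * t) * f ((1 - u) * t))
    (m : ℕ) {t : ℝ} (ht : 0 < t) :
    f t ≤ 2 ^ (((m : ℝ) ^ 2 + 11 * m) / 4) * t ^ (-(m / 2 : ℝ)) := by
  induction m generalizing t with
  | zero => simpa using hf_le_one t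
  | succ m ih =>
    -- the exponent `(m ^ 2 + 11 m) / 4` is chosen so that the bootstrap step closes exactly
    calc f t ≤ 2 ^ ((m / 2 : ℝ) + 3) * 2 ^ (((m : ℝ) ^ 2 + 11 * m) / 4)
          * t ^ (-((m / 2 : ℝ) + 1 / 2)) :=
          le_rpow_neg_add_half_of_le_rpow_neg hf hf_nonneg hdecay hconv (by positivity)
            (by positivity) (fun s hs => ih hs) ht
      _ = 2 ^ ((((m + 1 : ℕ) : ℝ) ^ 2 + 11 * (m + 1 : ℕ)) / 4) * t ^ (-((m + 1 : ℕ) / 2 : ℝ)) := by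
        rw [← rpow_add two_pos]
        push_cast
        ring_nf

theorem rpow_mul_le_two_rpow (hf : Continuous f) (hf_nonneg : ∀ s, 0 ≤ f s)
    (hf_le_one : ∀ s, f s ≤ 1) (hdecay : ∀ s, 0 < s → f s ≤ 2 / √s)
    (hconv : ∀ t, 0 < t → f t ≤ ∫ u in (0:ℝ)..1, f (u * t) * f ((1 - u) * t))
    {p : ℝ} (hp : 0 ≤ p) {t : ℝ} (ht : 0 < t) :
    t ^ p * f t ≤ 2 ^ (p ^ 2 + 6 * p) := by
  rcases le_or_gt t (2 ^ (p + 6)) with hsmall | hlarge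
  · calc t ^ p * f t ≤ t ^ p := mul_le_of_le_one_right (by positivity) (hf_le_one t)
      _ ≤ (2 ^ (p + 6)) ^ p := rpow_le_rpow ht.le hsmall hp
      _ = 2 ^ (p ^ 2 + 6 * p) := by rw [← rpow_mul zero_le_two]; ring_nf
  · set m : ℕ := ⌈2 * p⌉₊
    have hm_ge : 2 * p ≤ m := Nat.le_ceil _
    have hm_lt : (m : ℝ) < 2 * p + 1 := Nat.ceil_lt_add_one (by positivity)
    calc t ^ p * f t ≤ t ^ p * (2 ^ (((m : ℝ) ^ 2 + 11 * m) / 4) * t ^ (-(m / 2 : ℝ))) :=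
          mul_le_mul_of_nonneg_left
            (le_two_rpow_mul_rpow_neg_half hf hf_nonneg hf_le_one hdecay hconv m ht)
            (by positivity)
      _ = 2 ^ (((m : ℝ) ^ 2 + 11 * m) / 4) * t ^ (p - m / 2) := by
          rw [sub_eq_add_neg, rpow_add ht]; ring
      _ ≤ 2 ^ (((m : ℝ) ^ 2 + 11 * m) / 4) * (2 ^ (p + 6)) ^ (p - m / 2) :=
          mul_le_mul_of_nonneg_left
            (rpow_le_rpow_of_nonpos (by positivity) hlarge.le (by linarith)) (by positivity)
      _ = 2 ^ (((m : ℝ) ^ 2 + 11 * m) / 4 + (p + 6) * (p - m / 2)) := by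
          rw [← rpow_mul zero_le_two, ← rpow_add two_pos]
      _ ≤ 2 ^ (p ^ 2 + 6 * p) := by
          refine rpow_le_rpow_of_exponent_le one_le_two ?_
          nlinarith [mul_nonneg (Nat.cast_nonneg m : (0:ℝ) ≤ m) (by linarith : 0 ≤ 2 * p + 1 - m)]

theorem quicksort_charfun_cp_bound_general
    {Ω : Type*} [MeasurableSpace Ω] (μ : Measure Ω) [IsProbabilityMeasure μ]
    (Y Z U : Ω → ℝ) (hY : Measurable Y) (hZ : Measurable Z) (hU : Measurable U)
    (g : ℝ → ℝ)
    (hg : ∀ u : ℝ, g u = 2 * u * Real.log u + 2 * (1 - u) * Real.log (1 - u) + 1)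
    (hindep : iIndepFun ![Y, Z, U] μ)
    (hZY : Measure.map Z μ = Measure.map Y μ)
    (hUunif : Measure.map U μ = volume.restrict (Ioo (0:ℝ) 1))
    (hfix : Measure.map (fun ω => U ω * Y ω + (1 - U ω) * Z ω + g (U ω)) μ
            = Measure.map Y μ)
    (φ : ℝ → ℂ)
    (hφ : ∀ t : ℝ, φ t = ∫ ω, Complex.exp (Complex.I * t * Y ω) ∂μ) :
    ∀ p : ℝ, 0 < p → ∀ t : ℝ, 0 < t →
      t ^ p * ‖φ t‖ ≤ (2:ℝ) ^ (p^2 + 6*p) := by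
  intro p hp t ht
  have hg_eq : g = fun u => 1 - 2 * binEntropy u :=
    funext fun u => by rw [hg, binEntropy, log_inv, log_inv]; ring
  subst hg_eq
  set ν := μ.map Y
  have hfixν : ν = ((ν.prod ν).prod (volume.restrict (Ioo (0:ℝ) 1))).map
      (quicksortMap fun u => 1 - 2 * binEntropy u) := by
    calc ν = μ.map (fun ω => U ω * Y ω + (1 - U ω) * Z ω + (1 - 2 * binEntropy (U ω))) := hfix.symm
      _ = (μ.map fun ω => ((Y ω, Z ω), U ω)).map (quicksortMap fun u => 1 - 2 * binEntropy u) := by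
          rw [Measure.map_map (by fun_prop) (by fun_prop)]
          rfl
      _ = _ := by rw [map_prodMk_prodMk_eq_of_iIndepFun hY hZ hU hindep, hZY, hUunif]
  have hφν : ∀ s, φ s = charFun ν s := fun s => by
    rw [hφ, charFun_apply_real, integral_map hY.aemeasurable (by fun_prop)]
    ring_nf
  have : IsProbabilityMeasure ν := Measure.isProbabilityMeasure_map hY.aemeasurable
  rw [hφν]
  exact rpow_mul_le_two_rpow (f := fun s => ‖charFun ν s‖) (by fun_prop) (fun _ => norm_nonneg _)
    (fun _ => norm_charFun_le_one _)
    (fun s hs => by rw [hfixν]; exact norm_charFun_map_quicksortMap_binEntropy_le ν hs)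
    (fun s _ => norm_charFun_le_integral_of_eq_map_quicksortMap (by fun_prop) hfixν s) hp.le ht

theorem quicksort_charfun_cp_bound
    {Ω : Type*} [MeasurableSpace Ω] (μ : Measure Ω) [IsProbabilityMeasure μ]
    (Y Z U : Ω → ℝ) (hY : Measurable Y) (hZ : Measurable Z) (hU : Measurable U)
    (g : ℝ → ℝ)
    (hg : ∀ u : ℝ, g u = 2 * u * Real.log u + 2 * (1 - u) * Real.log (1 - u) + 1)
    (hindep : iIndepFun ![Y, Z, U] μ)
    (hZY : Measure.map Z μ = Measure.map Y μ)
    (hUunif : Measure.map U μ = volume.restrict (Ioo (0:ℝ) 1))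
    (hfix : Measure.map (fun ω => U ω * Y ω + (1 - U ω) * Z ω + g (U ω)) μ
            = Measure.map Y μ)
    (hmean : ∫ ω, Y ω ∂μ = 0)
    (hvar : Integrable (fun ω => (Y ω)^2) μ)
    (φ : ℝ → ℂ)
    (hφ : ∀ t : ℝ, φ t = ∫ ω, Complex.exp (Complex.I * t * Y ω) ∂μ) :
    ∀ p : ℝ, 0 < p → ∀ t : ℝ, 0 < t →
      t ^ p * ‖φ t‖ ≤ (2:ℝ) ^ (p^2 + 6*p) :=
  quicksort_charfun_cp_bound_general μ Y Z U hY hZ hU g hg hindep hZY hUunif hfix φ hφ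
end Bootstrap
end

section
/- Let g : (0,∞) → ℂ be twice differentiable, and suppose A, B, p > 0 satisfy |g(t)| ≤ A t^{-p} and |g''(t)| ≤ B for all t > 0. Then |g'(t)| ≤ 2√(AB) t^{-p/2} for all t > 0. -/
/-!
Taylor's formula with step `h > 0` gives `h ‖g' t‖ ≤ ‖g (t + h)‖ + ‖g t‖ + B h² / 2`, and since
`t ↦ A t^(-p)` is decreasing both values of `g` are bounded by `M = A t^(-p)`. The step
`h = 2 √(M / B)` balances the two terms and yields `‖g' t‖ ≤ 2 √(M B) = 2 √(A B) t^(-p/2)`.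
-/

open Set Real

section Taylor

variable {E : Type*} [NormedAddCommGroup E] [NormedSpace ℝ E] {f f' f'' : ℝ → E} {a b C : ℝ}

theorem norm_sub_sub_smul_deriv_le (hab : a ≤ b)
    (hf : ∀ x ∈ Icc a b, HasDerivAt f (f' x) x) (hf' : ∀ x ∈ Icc a b, HasDerivAt f' (f'' x) x)
    (hC : ∀ x ∈ Icc a b, ‖f'' x‖ ≤ C) :
    ‖f b - f a - (b - a) • f' a‖ ≤ C / 2 * (b - a) ^ 2 := by
  have hφ : ∀ x ∈ Icc a b, HasDerivAt (fun x ↦ f x - f a - (x - a) • f' a) (f' x - f' a) x :=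
    fun x hx ↦ by
      have h := ((hf x hx).sub_const (f a)).sub (((hasDerivAt_id x).sub_const a).smul_const (f' a))
      rwa [one_smul] at h
  have hf'_lip : ∀ x ∈ Icc a b, ‖f' x - f' a‖ ≤ C * (x - a) :=
    norm_image_sub_le_of_norm_deriv_le_segment' (fun x hx ↦ (hf' x hx).hasDerivWithinAt)
      fun x hx ↦ hC x (Ico_subset_Icc_self hx)
  have hquad (x : ℝ) : HasDerivAt (fun y ↦ C / 2 * (y - a) ^ 2) (C * (x - a)) x := by
    refine ((((hasDerivAt_id x).sub_const a).fun_pow 2).const_mul (C / 2)).congr_deriv ?_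
    simp only [id, Nat.cast_ofNat]
    ring
  exact image_norm_le_of_norm_deriv_right_le_deriv_boundary
    (fun x hx ↦ (hφ x hx).continuousAt.continuousWithinAt)
    (fun x hx ↦ (hφ x (Ico_subset_Icc_self hx)).hasDerivWithinAt) (by simp) hquad
    (fun x hx ↦ hf'_lip x (Ico_subset_Icc_self hx)) (right_mem_Icc.2 hab)

theorem norm_smul_deriv_le (hab : a ≤ b)
    (hf : ∀ x ∈ Icc a b, HasDerivAt f (f' x) x) (hf' : ∀ x ∈ Icc a b, HasDerivAt f' (f'' x) x)
    (hC : ∀ x ∈ Icc a b, ‖f'' x‖ ≤ C) :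
    ‖(b - a) • f' a‖ ≤ ‖f b‖ + ‖f a‖ + C / 2 * (b - a) ^ 2 := by
  have htaylor := norm_sub_sub_smul_deriv_le hab hf hf' hC
  calc ‖(b - a) • f' a‖ = ‖(f b - f a) - (f b - f a - (b - a) • f' a)‖ := by congr 1; abel
    _ ≤ ‖f b - f a‖ + ‖f b - f a - (b - a) • f' a‖ := norm_sub_le _ _
    _ ≤ ‖f b‖ + ‖f a‖ + C / 2 * (b - a) ^ 2 := by gcongr; exact norm_sub_le _ _

/-- Landau's inequality on a half-line. -/
theorem norm_deriv_le_two_mul_sqrt {M : ℝ} (hM : 0 < M) (hC₀ : 0 < C)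
    (hf : ∀ x ∈ Ici a, HasDerivAt f (f' x) x) (hf' : ∀ x ∈ Ici a, HasDerivAt f' (f'' x) x)
    (hfM : ∀ x ∈ Ici a, ‖f x‖ ≤ M) (hC : ∀ x ∈ Ici a, ‖f'' x‖ ≤ C) :
    ‖f' a‖ ≤ 2 * √(M * C) := by
  set s := √(M / C)
  have hs : 0 < s := sqrt_pos.2 (div_pos hM hC₀)
  have hs2 : s ^ 2 = M / C := sq_sqrt (div_pos hM hC₀).le
  have hM' : M = C * s ^ 2 := by rw [hs2]; field_simp
  have hsqrt : √(M * C) = C * s := by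
    rw [hM', show C * s ^ 2 * C = (C * s) ^ 2 by ring, sqrt_sq (by positivity)]
  have hstep := norm_smul_deriv_le (b := a + 2 * s) (by linarith)
    (fun x hx ↦ hf x hx.1) (fun x hx ↦ hf' x hx.1) (fun x hx ↦ hC x hx.1)
  rw [add_sub_cancel_left, norm_smul, norm_of_nonneg (by positivity)] at hstep
  have hends := add_le_add (hfM (a + 2 * s) (by simp [hs.le])) (hfM a (le_refl a))
  rw [hsqrt]
  refine le_of_mul_le_mul_left ?_ (by positivity : 0 < 2 * s)
  linarith

end Taylor

theorem deriv_bound_interpolation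
    (g g' g'' : ℝ → ℂ) (A B p : ℝ) (hA : 0 < A) (hB : 0 < B) (hp : 0 < p)
    (hd1 : ∀ t : ℝ, 0 < t → HasDerivAt g (g' t) t)
    (hd2 : ∀ t : ℝ, 0 < t → HasDerivAt g' (g'' t) t)
    (hg : ∀ t : ℝ, 0 < t → ‖g t‖ ≤ A * t ^ (-p))
    (hg'' : ∀ t : ℝ, 0 < t → ‖g'' t‖ ≤ B) :
    ∀ t : ℝ, 0 < t → ‖g' t‖ ≤ 2 * Real.sqrt (A * B) * t ^ (-p/2) := by
  intro t ht
  have hpos : ∀ x ∈ Ici t, 0 < x := fun x hx ↦ ht.trans_le hx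
  have hmono : ∀ x ∈ Ici t, ‖g x‖ ≤ A * t ^ (-p) := fun x hx ↦
    (hg x (hpos x hx)).trans <|
      mul_le_mul_of_nonneg_left (rpow_le_rpow_of_nonpos ht hx (by linarith)) hA.le
  have hsqrt : √(A * t ^ (-p) * B) = √(A * B) * t ^ (-p/2) := by
    rw [show A * t ^ (-p) * B = A * B * (t ^ (-p/2)) ^ 2 by
        rw [← rpow_mul_natCast ht.le]; ring_nf,
      sqrt_mul' _ (by positivity), sqrt_sq (by positivity)]
  rw [mul_assoc, ← hsqrt]
  exact norm_deriv_le_two_mul_sqrt (by positivity) hB (fun x hx ↦ hd1 x (hpos x hx))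
    (fun x hx ↦ hd2 x (hpos x hx)) hmono (fun x hx ↦ hg'' x (hpos x hx))
end

section
/- Suppose f : ℝ → ℝ is a continuous probability density which is positive almost everywhere and satisfies f(x) = ∫_0^1 ∫_ℝ f(y) f((x - g(u) - (1-u)y)/u)(1/u) dy du for all x, with g(u) = 2u ln u + 2(1-u) ln(1-u) + 1. Then f(x) > 0 for every real x. -/
/-!
Write `A x` for the right-hand side computed with lower Lebesgue integrals. Tonelli and the
substitution `x = u z + (1 - u) y + g u` give `∫⁻ A = (∫⁻ f)² = 1`, so `A` is finite, and
hence equal to `f`, almost everywhere. As `f > 0` a.e., there are `y < x₀ - 1 < z` with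
`f y, f z > 0`; since `g = 1 - 2 binEntropy` is continuous with `g 0 = g 1 = 1`, the
intermediate value theorem yields `u ∈ (0, 1)` with `x₀ = u z + (1 - u) y + g u`, i.e. the
integrand is positive at `(x₀, u, y)`. By continuity it is bounded below on a box around that
point, so `f ≥ M > 0` at almost every point near `x₀`, hence at `x₀` by continuity of `f`.
-/

open Set Real MeasureTheory

open Filter Topology
open scoped ENNReal

theorem lintegral_comp_sub_div {F : ℝ → ℝ≥0∞} (hF : Measurable F) (c : ℝ) {u : ℝ}
    (hu : 0 < u) :
    ∫⁻ x, F ((x - c) / u) = ENNReal.ofReal u * ∫⁻ x, F x := by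
  rw [lintegral_sub_right_eq_self (fun x => F (x / u)) c]
  calc ∫⁻ x, F (x / u) = ∫⁻ x, F x ∂(Measure.map (u⁻¹ * ·) volume) := by
        rw [lintegral_map hF (measurable_const_mul _)]
        simp only [div_eq_inv_mul]
    _ = ENNReal.ofReal u * ∫⁻ x, F x := by
        rw [Real.map_volume_mul_left (inv_ne_zero hu.ne'), lintegral_smul_measure, inv_inv,
          abs_of_pos hu, smul_eq_mul]

theorem frequently_nhds_of_ae {X : Type*} [TopologicalSpace X] [MeasurableSpace X]
    (μ : Measure X) [μ.IsOpenPosMeasure] {p : X → Prop} (hp : ∀ᵐ x ∂μ, p x) (x : X) :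
    ∃ᶠ y in 𝓝 x, p y :=
  fun h => (Measure.measure_pos_of_mem_nhds μ h).ne' (ae_iff.1 hp)

theorem mul_measure_le_setLIntegral_lintegral {α β : Type*} [MeasurableSpace α]
    [MeasurableSpace β] {μ : Measure α} {ν : Measure β} {H : α → β → ℝ≥0∞}
    {S s : Set α} {t : Set β} (hs : MeasurableSet s) (ht : MeasurableSet t) (hsS : s ⊆ S)
    {c : ℝ≥0∞} (hc : ∀ u ∈ s, ∀ y ∈ t, c ≤ H u y) :
    c * ν t * μ s ≤ ∫⁻ u in S, ∫⁻ y, H u y ∂ν ∂μ :=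
  calc c * ν t * μ s = ∫⁻ _ in s, c * ν t ∂μ := (setLIntegral_const s _).symm
    _ ≤ ∫⁻ u in s, ∫⁻ y in t, H u y ∂ν ∂μ := setLIntegral_mono' hs fun u hu =>
        (setLIntegral_const t c).symm.le.trans (setLIntegral_mono' ht (hc u hu))
    _ ≤ ∫⁻ u in s, ∫⁻ y, H u y ∂ν ∂μ :=
        lintegral_mono fun _ => setLIntegral_le_lintegral t _
    _ ≤ ∫⁻ u in S, ∫⁻ y, H u y ∂ν ∂μ := lintegral_mono_set hsS

theorem exists_mem_Ioo_convex_comb_add_eq {g : ℝ → ℝ} (hg : ContinuousOn g (Icc 0 1))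
    {x y z : ℝ} (hy : y + g 0 < x) (hz : x < z + g 1) :
    ∃ u ∈ Ioo (0 : ℝ) 1, u * z + (1 - u) * y + g u = x := by
  have hφ : ContinuousOn (fun u => u * z + (1 - u) * y + g u) (Icc 0 1) := by fun_prop
  exact intermediate_value_Ioo zero_le_one hφ ⟨by simpa using hy, by simpa using hz⟩

theorem two_mul_log_add_two_mul_log_one_sub_add_one (u : ℝ) :
    2 * u * Real.log u + 2 * (1 - u) * Real.log (1 - u) + 1 = 1 - 2 * binEntropy u := by
  rw [binEntropy, Real.log_inv, Real.log_inv]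
  ring

/-- For `Y, Z` independent with density `f`, this is the joint density at `(x, y)` of
`(u Z + (1 - u) Y + g u, Y)`. -/
noncomputable def mixtureKernel (f g : ℝ → ℝ) (x u y : ℝ) : ℝ :=
  f y * f ((x - g u - (1 - u) * y) / u) * (1 / u)

/-- Unlike the Bochner integrals of the fixed-point equation, this has no junk value `0` at
non-integrable integrands. -/
noncomputable def mixtureMass (f g : ℝ → ℝ) (x : ℝ) : ℝ≥0∞ :=
  ∫⁻ u in Ioo 0 1, ∫⁻ y, ENNReal.ofReal (mixtureKernel f g x u y)

section
variable {f g : ℝ → ℝ}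

theorem measurable_mixtureKernel (hf : Measurable f) (hg : Measurable g) :
    Measurable fun p : ℝ × ℝ × ℝ => mixtureKernel f g p.1 p.2.1 p.2.2 := by
  unfold mixtureKernel
  fun_prop

theorem measurable_mixtureMass (hf : Measurable f) (hg : Measurable g) :
    Measurable (mixtureMass f g) := by
  have h := (measurable_mixtureKernel hf hg).ennreal_ofReal.comp
    MeasurableEquiv.prodAssoc.measurable
  exact h.lintegral_prod_right'.lintegral_prod_right'

theorem continuousAt_mixtureKernel (hf : Continuous f) (hg : Continuous g) {x u y : ℝ}
    (hu : u ≠ 0) :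
    ContinuousAt (fun p : ℝ × ℝ × ℝ => mixtureKernel f g p.1 p.2.1 p.2.2) (x, u, y) := by
  unfold mixtureKernel
  fun_prop (disch := exact hu)

theorem ofReal_mixtureKernel (hf0 : ∀ x, 0 ≤ f x) (x u y : ℝ) :
    ENNReal.ofReal (mixtureKernel f g x u y) = ENNReal.ofReal (f y) * ENNReal.ofReal u⁻¹ *
      ENNReal.ofReal (f ((x - (g u + (1 - u) * y)) / u)) := by
  rw [mixtureKernel, ENNReal.ofReal_mul (mul_nonneg (hf0 _) (hf0 _)), ENNReal.ofReal_mul (hf0 _),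
    sub_sub, one_div]
  ring

theorem lintegral_mixtureMass (hf : Measurable f) (hf0 : ∀ x, 0 ≤ f x) (hg : Measurable g) :
    ∫⁻ x, mixtureMass f g x = (∫⁻ x, ENNReal.ofReal (f x)) ^ 2 := by
  have hK := (measurable_mixtureKernel hf hg).ennreal_ofReal
  have inner : ∀ u ∈ Ioo (0 : ℝ) 1, ∫⁻ x, ∫⁻ y, ENNReal.ofReal (mixtureKernel f g x u y) =
      (∫⁻ x, ENNReal.ofReal (f x)) ^ 2 := by
    intro u hu
    have hKu : Measurable (Function.uncurry fun x y => ENNReal.ofReal (mixtureKernel f g x u y)) :=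
      hK.comp (f := fun q : ℝ × ℝ => (q.1, u, q.2)) (by fun_prop)
    rw [lintegral_lintegral_swap hKu.aemeasurable, sq,
      ← lintegral_mul_const _ hf.ennreal_ofReal]
    refine lintegral_congr fun y => ?_
    simp_rw [ofReal_mixtureKernel hf0]
    rw [lintegral_const_mul' _ _ (by finiteness),
      lintegral_comp_sub_div hf.ennreal_ofReal _ hu.1, ← mul_assoc, mul_assoc (ENNReal.ofReal _),
      ← ENNReal.ofReal_mul (inv_nonneg.2 hu.1.le), inv_mul_cancel₀ hu.1.ne', ENNReal.ofReal_one,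
      mul_one]
  calc ∫⁻ x, mixtureMass f g x
      = ∫⁻ u in Ioo 0 1, ∫⁻ x, ∫⁻ y, ENNReal.ofReal (mixtureKernel f g x u y) :=
        lintegral_lintegral_swap
          (hK.comp MeasurableEquiv.prodAssoc.measurable).lintegral_prod_right'.aemeasurable
    _ = ∫⁻ u in Ioo 0 1, (∫⁻ x, ENNReal.ofReal (f x)) ^ 2 :=
        setLIntegral_congr_fun measurableSet_Ioo inner
    _ = (∫⁻ x, ENNReal.ofReal (f x)) ^ 2 := by simp [Real.volume_Ioo]

theorem ofReal_eq_mixtureMass (hf : Measurable f) (hf0 : ∀ x, 0 ≤ f x) (hg : Measurable g)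
    {x : ℝ} (hx : f x = ∫ u in Ioo 0 1, ∫ y, mixtureKernel f g x u y)
    (hfin : mixtureMass f g x ≠ ∞) :
    ENNReal.ofReal (f x) = mixtureMass f g x := by
  have hK := (measurable_mixtureKernel hf hg).ennreal_ofReal
  have hmeas : AEMeasurable (fun u => ∫⁻ y, ENNReal.ofReal (mixtureKernel f g x u y))
      (volume.restrict (Ioo 0 1)) :=
    (hK.comp (f := fun p : ℝ × ℝ => (x, p.1, p.2)) (by fun_prop)).lintegral_prod_right'
      |>.aemeasurable
  have inner : ∀ u ∈ Ioo (0 : ℝ) 1, ∫ y, mixtureKernel f g x u y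
      = (∫⁻ y, ENNReal.ofReal (mixtureKernel f g x u y)).toReal := fun u hu =>
    integral_eq_lintegral_of_nonneg_ae (Eventually.of_forall fun y =>
      mul_nonneg (mul_nonneg (hf0 _) (hf0 _)) (one_div_nonneg.2 hu.1.le))
      ((measurable_mixtureKernel hf hg).comp (f := fun y : ℝ => (x, u, y))
        (by fun_prop)).aestronglyMeasurable
  rw [hx, setIntegral_congr_fun measurableSet_Ioo inner,
    integral_toReal hmeas (ae_lt_top' hmeas hfin)]
  exact ENNReal.ofReal_toReal hfin

theorem exists_pos_le_mixtureMass (hf : Continuous f) (hg : Continuous g) {x₀ u₀ y₀ : ℝ}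
    (hu₀ : u₀ ∈ Ioo (0 : ℝ) 1) (hpos : 0 < mixtureKernel f g x₀ u₀ y₀) :
    ∃ M > 0, ∀ᶠ x in 𝓝 x₀, M ≤ mixtureMass f g x := by
  set c := mixtureKernel f g x₀ u₀ y₀ / 2
  obtain ⟨ε, hε, hball⟩ := Metric.eventually_nhds_iff_ball.1
    ((continuousAt_mixtureKernel hf hg hu₀.1.ne').eventually (lt_mem_nhds (half_lt_self hpos)))
  set s := Metric.ball u₀ ε ∩ Ioo 0 1
  refine ⟨ENNReal.ofReal c * volume (Metric.ball y₀ ε) * volume s, ?_, ?_⟩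
  · refine ENNReal.mul_pos (ENNReal.mul_pos (ENNReal.ofReal_pos.2 (half_pos hpos)).ne'
      (Metric.measure_ball_pos volume y₀ hε).ne').ne' ?_
    exact ((Metric.isOpen_ball.inter isOpen_Ioo).measure_pos volume
      ⟨u₀, Metric.mem_ball_self hε, hu₀⟩).ne'
  · filter_upwards [Metric.ball_mem_nhds x₀ hε] with x hx
    refine mul_measure_le_setLIntegral_lintegral (measurableSet_ball.inter measurableSet_Ioo)
      measurableSet_ball inter_subset_right fun u hu y hy => ENNReal.ofReal_le_ofReal ?_
    refine (hball (x, u, y) ?_).le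
    simp only [Metric.mem_ball, Prod.dist_eq] at hx hu hy ⊢
    exact max_lt hx (max_lt hu.1 hy)

theorem pos_of_mixtureKernel_pos (hf : Continuous f) (hf0 : ∀ x, 0 ≤ f x)
    (hfin : ∫⁻ x, ENNReal.ofReal (f x) ≠ ∞) (hg : Continuous g)
    (heq : ∀ x, f x = ∫ u in Ioo 0 1, ∫ y, mixtureKernel f g x u y) {x₀ u₀ y₀ : ℝ}
    (hu₀ : u₀ ∈ Ioo (0 : ℝ) 1) (hpos : 0 < mixtureKernel f g x₀ u₀ y₀) :
    0 < f x₀ := by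
  obtain ⟨M, hM, hMle⟩ := exists_pos_le_mixtureMass hf hg hu₀ hpos
  have hmass_fin : ∀ᵐ x, mixtureMass f g x < ∞ := by
    refine ae_lt_top (measurable_mixtureMass hf.measurable hg.measurable) ?_
    rw [lintegral_mixtureMass hf.measurable hf0 hg.measurable]
    exact ENNReal.pow_ne_top hfin
  have hfreq : ∃ᶠ x in 𝓝 x₀, M ≤ ENNReal.ofReal (f x) :=
    ((frequently_nhds_of_ae volume hmass_fin x₀).and_eventually hMle).mono fun x ⟨hx, hMx⟩ =>
      (ofReal_eq_mixtureMass hf.measurable hf0 hg.measurable (heq x) hx.ne).symm ▸ hMx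
  have hMf : M ≤ ENNReal.ofReal (f x₀) :=
    isClosed_Ici.mem_of_frequently_of_tendsto hfreq
      (ENNReal.continuous_ofReal.comp hf).continuousAt
  exact ENNReal.ofReal_pos.1 (hM.trans_le hMf)

end

theorem density_everywhere_positive
    (f : ℝ → ℝ) (hfc : Continuous f) (hf0 : ∀ x : ℝ, 0 ≤ f x)
    (hf1 : ∫ x : ℝ, f x = 1)
    (hae : ∀ᵐ x : ℝ, 0 < f x)
    (g : ℝ → ℝ)
    (hg : ∀ u : ℝ, g u = 2 * u * Real.log u + 2 * (1 - u) * Real.log (1 - u) + 1)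
    (heq : ∀ x : ℝ, f x = ∫ u in Ioo (0:ℝ) 1,
        ∫ y : ℝ, f y * f ((x - g u - (1 - u) * y) / u) * (1 / u)) :
    ∀ x : ℝ, 0 < f x := by
  intro x₀
  have hg' : g = fun u => 1 - 2 * binEntropy u :=
    funext fun u => (hg u).trans (two_mul_log_add_two_mul_log_one_sub_add_one u)
  have hgc : Continuous g := by rw [hg']; fun_prop
  have hg0 : g 0 = 1 := by simp [hg']
  have hg1 : g 1 = 1 := by simp [hg']
  have hfi : Integrable f := by
    by_contra h
    simp [integral_undef h] at hf1
  obtain ⟨y, hy, hfy⟩ := Measure.exists_mem_of_measure_ne_zero_of_ae (s := Iio (x₀ - 1))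
    (by simp) (ae_restrict_of_ae hae)
  obtain ⟨z, hz, hfz⟩ := Measure.exists_mem_of_measure_ne_zero_of_ae (s := Ioi (x₀ - 1))
    (by simp) (ae_restrict_of_ae hae)
  obtain ⟨u, hu, hux⟩ := exists_mem_Ioo_convex_comb_add_eq hgc.continuousOn
    (by rw [hg0]; linarith [mem_Iio.1 hy] : y + g 0 < x₀)
    (by rw [hg1]; linarith [mem_Ioi.1 hz] : x₀ < z + g 1)
  have hz' : (x₀ - g u - (1 - u) * y) / u = z := by
    rw [div_eq_iff hu.1.ne']
    linarith
  refine pos_of_mixtureKernel_pos hfc hf0 hfi.lintegral_lt_top.ne hgc heq hu (y₀ := y) ?_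
  rw [mixtureKernel, hz']
  exact mul_pos (mul_pos hfy hfz) (one_div_pos.2 hu.1)
end
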